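/- arXiv:2602.22398 — 4 statements merged into one kernel-verified Lean document; each statement's English description precedes it below -/
import Mathlib

section
/- Fix a finite height h > 0, n ∈ ω, and let k = n(h+1). For every h-tree M (possibly infinite), there is a finite h-tree Y (namely one whose root has the same (k,h)-color as the root of M) such that Duplicator has a winning strategy in the n-round Ehrenfeucht–Fraïssé game between M and Y over L_h. -/
open Set
open scoped Classical

/-- An `h`-forest: the reduct to the language `L_h = {P₀,…,P_h, <₀,…,<_{h−1}}` of a model of the
leveled-forest theory `T₀` (levels beyond `h` are empty, i.e. forgotten). -/
structure HForest (h : ℕ) where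
  α : Type
  P : ℕ → Set α
  lt : ℕ → α → α → Prop
  disj : ∀ i j, i ≠ j → ∀ x, x ∈ P i → x ∉ P j
  dom : ∀ i x y, lt i x y → x ∈ P i ∧ y ∈ P (i + 1)
  exists_pred : ∀ i y, y ∈ P (i + 1) → ∃ x, lt i x y
  unique_pred : ∀ i x x' y, lt i x y → lt i x' y → x = x'
  bddP : ∀ i, h < i → P i = ∅
  bddlt : ∀ i, h ≤ i → ∀ x y, ¬ lt i x y

/-- The `σ`-part of a `(k,h)`-color of a node with `d` levels remaining above it:
a set of pairs (color of an immediate successor, number of such successors capped at `k`). -/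
def ColorSig : ℕ → Type
  | 0 => PUnit
  | d + 1 => Set (ColorSig d × ℕ)

/-- The `σ`-part of the `k`-bounded coloring of the `h`-forest `F`, computed inductively from the
leaves down: `sig k F d x` is the `σ`-color of `x` viewed as a node at level `h - d`. -/
noncomputable def sig (k : ℕ) {h : ℕ} (F : HForest h) : (d : ℕ) → F.α → ColorSig d
  | 0, _ => PUnit.unit
  | d + 1, x =>
    {p | (∃ y, F.lt (h - (d + 1)) x y ∧ sig k F d y = p.1) ∧
      p.2 = (min (k : ℕ∞) {z | F.lt (h - (d + 1)) x z ∧ sig k F d z = p.1}.encard).toNat}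

/-- A `(k,h)`-color: a level `l ∈ {0,…,h}` together with a `σ`-part (or `none`, representing
level `-1`, for elements lying in no `Pᵢ` with `i ≤ h`). -/
def Color (h : ℕ) : Type := Option ((l : Fin (h + 1)) × ColorSig (h - l))

/-- The `(k,h)`-color of an element of an `h`-forest. -/
noncomputable def colorOf (k : ℕ) {h : ℕ} (F : HForest h) (x : F.α) : Color h :=
  if hx : ∃ l : Fin (h + 1), x ∈ F.P l then some ⟨hx.choose, sig k F (h - hx.choose) x⟩
  else none

/-- `s` is (the graph of) a partial isomorphism between the `h`-forests `F` and `G`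
(in the language `L_h`). -/
def PIso {h : ℕ} (F G : HForest h) (s : List (F.α × G.α)) : Prop :=
  (∀ p ∈ s, ∀ q ∈ s, p.1 = q.1 ↔ p.2 = q.2) ∧
  (∀ p ∈ s, ∀ i, p.1 ∈ F.P i ↔ p.2 ∈ G.P i) ∧
  (∀ p ∈ s, ∀ q ∈ s, ∀ i, F.lt i p.1 q.1 ↔ G.lt i p.2 q.2)

/-- Duplicator (∃) has a winning strategy in the `n`-round Ehrenfeucht–Fraïssé game between the
`h`-forests `F` and `G` (over `L_h`), starting from the position `s`: the position is a partial
isomorphism, and whichever structure Spoiler picks a new element in, Duplicator can reply in the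
other structure so as to keep winning. -/
def EFWin {h : ℕ} (F G : HForest h) : ℕ → List (F.α × G.α) → Prop
  | 0, s => PIso F G s
  | n + 1, s => PIso F G s ∧ (∀ a : F.α, ∃ b : G.α, EFWin F G n ((a, b) :: s)) ∧
      (∀ b : G.α, ∃ a : F.α, EFWin F G n ((a, b) :: s))

/-! Prune `M` to `Y`: keep the root and, below every kept node, at most `k + 1` children of
each `(k,h)`-color, and keep at most `k + 1` nodes lying on no level. Capping at `k + 1` rather
than `k` still records which colors occur, so kept nodes keep their colors; and `Y` is finite
because there are finitely many colors at each depth.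

Duplicator maintains a color-preserving partial isomorphism that contains the position and is
closed under predecessors. To answer a node at level `l` she first answers its ancestors from the
root down, matching each one to a not yet used child, of the same color, of the partner of its
parent; since the capped counts of such children agree, one exists as long as fewer than `k`
pairs are in use. A round costs at most `h + 1` new pairs, so `n` rounds fit into
`k = n(h + 1)`. -/

namespace HForest

variable {h : ℕ}

def junk (F : HForest h) : Set F.α := {x | ∀ i, x ∉ F.P i}

variable {F : HForest h}

theorem level_eq {x : F.α} {i j : ℕ} (hi : x ∈ F.P i) (hj : x ∈ F.P j) : i = j := by
  by_contra hne
  exact F.disj i j hne x hi hj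

theorem mem_P_iff {x : F.α} {l : ℕ} (hx : x ∈ F.P l) (i : ℕ) : x ∈ F.P i ↔ i = l :=
  ⟨fun hi => level_eq hi hx, fun hi => hi ▸ hx⟩

theorem le_height_of_mem_P {x : F.α} {l : ℕ} (hx : x ∈ F.P l) : l ≤ h := by
  by_contra hlt
  rw [F.bddP l (by omega)] at hx
  exact hx

theorem lt_height_of_lt {i : ℕ} {x y : F.α} (hxy : F.lt i x y) : i < h := by
  by_contra hle
  exact F.bddlt i (by omega) x y hxy

theorem eq_of_lt_of_lt {i j : ℕ} {x y z : F.α} (hx : F.lt i x z) (hy : F.lt j y z) :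
    i = j ∧ x = y := by
  obtain rfl : i = j := by
    have := level_eq (F.dom i x z hx).2 (F.dom j y z hy).2
    omega
  exact ⟨rfl, F.unique_pred i x y z hx hy⟩

theorem not_lt_self {i : ℕ} {x : F.α} : ¬ F.lt i x x := fun hx =>
  Nat.succ_ne_self i (level_eq (F.dom i x x hx).2 (F.dom i x x hx).1)

theorem not_lt_of_mem_junk {i : ℕ} {x y : F.α} (hy : y ∈ F.junk) : ¬ F.lt i x y :=
  fun hxy => hy (i + 1) (F.dom i x y hxy).2

theorem not_mem_P_zero_of_lt {i : ℕ} {x y : F.α} (hxy : F.lt i x y) : y ∉ F.P 0 :=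
  fun hy => Nat.succ_ne_zero i (level_eq (F.dom i x y hxy).2 hy)

@[reducible]
def restrict (F : HForest h) (S : Set F.α) (hS : ∀ i x y, F.lt i x y → y ∈ S → x ∈ S) :
    HForest h where
  α := S
  P i := {x | x.1 ∈ F.P i}
  lt i x y := F.lt i x y
  disj i j hij x := F.disj i j hij x
  dom i x y := F.dom i x y
  exists_pred i y hy := by
    obtain ⟨x, hx⟩ := F.exists_pred i y hy
    exact ⟨⟨x, hS i x y hx y.2⟩, hx⟩
  unique_pred i x x' y hx hx' := Subtype.ext (F.unique_pred i x x' y hx hx')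
  bddP i hi := by
    ext x
    simp [F.bddP i hi]
  bddlt i hi x y := F.bddlt i hi x y

theorem encard_junk_restrict (S : Set F.α) (hS : ∀ i x y, F.lt i x y → y ∈ S → x ∈ S) :
    (F.restrict S hS).junk.encard = (S ∩ F.junk).encard := by
  rw [← Subtype.image_preimage_coe, Subtype.val_injective.injOn.encard_image]
  rfl

end HForest

noncomputable def capSubset {α : Type*} (s : Set α) (k : ℕ) : Set α :=
  (exists_subset_encard_eq (min_le_right (k : ℕ∞) s.encard)).choose

theorem capSubset_subset {α : Type*} (s : Set α) (k : ℕ) : capSubset s k ⊆ s :=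
  (exists_subset_encard_eq (min_le_right (k : ℕ∞) s.encard)).choose_spec.1

theorem encard_capSubset {α : Type*} (s : Set α) (k : ℕ) :
    (capSubset s k).encard = min (k : ℕ∞) s.encard :=
  (exists_subset_encard_eq (min_le_right (k : ℕ∞) s.encard)).choose_spec.2

theorem capSubset_finite {α : Type*} (s : Set α) (k : ℕ) : (capSubset s k).Finite := by
  rw [← encard_ne_top_iff, encard_capSubset]
  exact ne_top_of_le_ne_top (ENat.natCast_ne_top k) (min_le_left _ _)

theorem min_coe_min_succ (k : ℕ) (e : ℕ∞) :
    min (k : ℕ∞) (min ((k + 1 : ℕ) : ℕ∞) e) = min (k : ℕ∞) e := by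
  rw [← min_assoc, min_eq_left (show (k : ℕ∞) ≤ ((k + 1 : ℕ) : ℕ∞) by exact_mod_cast k.le_succ)]

theorem nonempty_iff_and_min_eq_of_min_succ_eq {α β : Type*} {k : ℕ} {s : Set α} {t : Set β}
    (hst : min ((k + 1 : ℕ) : ℕ∞) s.encard = min ((k + 1 : ℕ) : ℕ∞) t.encard) :
    (s.Nonempty ↔ t.Nonempty) ∧ min (k : ℕ∞) s.encard = min (k : ℕ∞) t.encard := by
  have hpos : ∀ e : ℕ∞, 0 < e ↔ 0 < min ((k + 1 : ℕ) : ℕ∞) e := fun e => by simp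
  refine ⟨?_, ?_⟩
  · rw [← encard_pos, ← encard_pos, hpos, hpos t.encard, hst]
  · rw [← min_coe_min_succ, hst, min_coe_min_succ]

theorem min_coe_eq_of_toNat_eq {k : ℕ} {a b : ℕ∞}
    (hab : (min (k : ℕ∞) a).toNat = (min (k : ℕ∞) b).toNat) : min (k : ℕ∞) a = min (k : ℕ∞) b := by
  have hfin : ∀ e : ℕ∞, min (k : ℕ∞) e ≠ ⊤ := fun e =>
    ne_top_of_le_ne_top (ENat.natCast_ne_top k) (min_le_left _ _)
  rw [← ENat.natCast_toNat (hfin a), ← ENat.natCast_toNat (hfin b), hab]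

section Colors

variable {h : ℕ}

def coloredChildren (k : ℕ) (F : HForest h) (d : ℕ) (x : F.α) (c : ColorSig d) : Set F.α :=
  {z | F.lt (h - (d + 1)) x z ∧ sig k F d z = c}

theorem sig_succ (k : ℕ) (F : HForest h) (d : ℕ) (x : F.α) :
    sig k F (d + 1) x = {p | (coloredChildren k F d x p.1).Nonempty ∧
      p.2 = (min (k : ℕ∞) (coloredChildren k F d x p.1).encard).toNat} :=
  rfl

theorem finite_range_sig (k : ℕ) (F : HForest h) : ∀ d, (range (sig k F d)).Finite
  | 0 => (subsingleton_of_subsingleton (α := PUnit)).finite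
  | d + 1 => by
    refine (((finite_range_sig k F d).prod (finite_Iic k)).finite_subsets).subset ?_
    rintro _ ⟨x, rfl⟩ ⟨c, m⟩ ⟨⟨z, -, hz⟩, hm⟩
    exact ⟨⟨z, hz⟩, hm ▸ ENat.toNat_le_of_le_natCast (min_le_left _ _)⟩

theorem sig_succ_eq_iff {k d : ℕ} {F G : HForest h} {x : F.α} {y : G.α} :
    sig k F (d + 1) x = sig k G (d + 1) y ↔ ∀ c,
      ((coloredChildren k F d x c).Nonempty ↔ (coloredChildren k G d y c).Nonempty) ∧
      min (k : ℕ∞) (coloredChildren k F d x c).encard =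
        min (k : ℕ∞) (coloredChildren k G d y c).encard := by
  constructor
  · intro hxy c
    have key : ∀ {F' G' : HForest h} {x' : F'.α} {y' : G'.α},
        sig k F' (d + 1) x' = sig k G' (d + 1) y' → (coloredChildren k F' d x' c).Nonempty →
        (coloredChildren k G' d y' c).Nonempty ∧
          min (k : ℕ∞) (coloredChildren k F' d x' c).encard =
            min (k : ℕ∞) (coloredChildren k G' d y' c).encard := by
      intro F' G' x' y' hs hne
      have hmem : (c, (min (k : ℕ∞) (coloredChildren k F' d x' c).encard).toNat) ∈
          (show Set (ColorSig d × ℕ) from sig k G' (d + 1) y') := hs ▸ ⟨hne, rfl⟩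
      exact ⟨hmem.1, min_coe_eq_of_toNat_eq hmem.2⟩
    by_cases hF : (coloredChildren k F d x c).Nonempty
    · obtain ⟨hG, hmin⟩ := key hxy hF
      exact ⟨iff_of_true hF hG, hmin⟩
    · by_cases hG : (coloredChildren k G d y c).Nonempty
      · exact absurd (key hxy.symm hG).1 hF
      · rw [not_nonempty_iff_eq_empty] at hF hG
        simp [hF, hG]
  · intro hc
    refine Set.ext fun ⟨c, m⟩ => ?_
    simp only [sig_succ, mem_ofPred_eq, (hc c).1, (hc c).2]

theorem sig_restrict (K : ℕ) {F : HForest h} {S : Set F.α}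
    (hS : ∀ i x y, F.lt i x y → y ∈ S → x ∈ S)
    (hcount : ∀ d < h, ∀ x ∈ S, x ∈ F.P (h - (d + 1)) → ∀ c,
      min ((K + 1 : ℕ) : ℕ∞) (S ∩ coloredChildren K F d x c).encard =
        min ((K + 1 : ℕ) : ℕ∞) (coloredChildren K F d x c).encard) :
    ∀ d ≤ h, ∀ x (hx : x ∈ S), x ∈ F.P (h - d) →
      sig K (F.restrict S hS) d ⟨x, hx⟩ = sig K F d x := by
  intro d
  induction d with
  | zero => intros; rfl
  | succ d ih =>
    intro hd x hx hxP
    have hchild : ∀ {z}, F.lt (h - (d + 1)) x z → z ∈ F.P (h - d) := fun hz => by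
      have := (F.dom _ x _ hz).2
      rwa [show h - (d + 1) + 1 = h - d by omega] at this
    have himage : ∀ c, Subtype.val '' coloredChildren K (F.restrict S hS) d ⟨x, hx⟩ c =
        S ∩ coloredChildren K F d x c := by
      intro c
      ext z
      constructor
      · rintro ⟨⟨z, hz⟩, ⟨hxz, hc⟩, rfl⟩
        exact ⟨hz, hxz, by rwa [ih (by omega) z hz (hchild hxz)] at hc⟩
      · rintro ⟨hz, hxz, hc⟩
        exact ⟨⟨z, hz⟩, ⟨hxz, by rwa [ih (by omega) z hz (hchild hxz)]⟩, rfl⟩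
    refine sig_succ_eq_iff.2 fun c => ?_
    rw [← image_nonempty, ← Subtype.val_injective.injOn.encard_image, himage]
    exact nonempty_iff_and_min_eq_of_min_succ_eq (hcount d (by omega) x hx hxP c)

end Colors

theorem List.encard_setOf_mem_le {β : Type*} (t : List β) : {p | p ∈ t}.encard ≤ t.length := by
  have : {p | p ∈ t} = (t.toFinset : Set β) := by ext; simp
  rw [this, encard_coe_eq_coe_finsetCard]
  exact_mod_cast t.toFinset_card_le

theorem exists_fresh_of_min_encard_eq {α β : Type*} {k : ℕ} {t : List (α × β)}
    (ht : ∀ p ∈ t, ∀ q ∈ t, p.1 = q.1 → p.2 = q.2) {A : Set α} {B : Set β} {a : α}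
    (ha : a ∈ A) (hadom : ∀ b, (a, b) ∉ t) (hAB : min (k : ℕ∞) A.encard = min (k : ℕ∞) B.encard)
    (hlen : t.length < k) (hback : ∀ p ∈ t, p.2 ∈ B → p.1 ∈ A) :
    ∃ b ∈ B, ∀ x, (x, b) ∉ t := by
  -- If `t` covered `B`, its pairs `T` over `B` would give `|B| ≤ |T| < min(k, |A|)`.
  by_contra! hcov
  set T := {p | p ∈ t ∧ p.2 ∈ B}
  have hTt : T.encard ≤ t.length :=
    (encard_le_encard fun p hp => hp.1).trans t.encard_setOf_mem_le
  have hBT : B.encard ≤ T.encard := by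
    refine le_trans (encard_le_encard fun b hb => ?_) (encard_image_le Prod.snd T)
    obtain ⟨x, hx⟩ := hcov b hb
    exact ⟨(x, b), ⟨hx, hb⟩, rfl⟩
  have hTA : T.encard + 1 ≤ A.encard := by
    have hinj : InjOn Prod.fst T := fun p hp q hq hpq =>
      Prod.ext hpq (ht p hp.1 q hq.1 hpq)
    have himage : Prod.fst '' T ⊆ A \ {a} := by
      rintro _ ⟨p, ⟨hp, hpB⟩, rfl⟩
      refine ⟨hback p hp hpB, fun hpa => hadom p.2 ?_⟩
      rw [← show p.1 = a from hpa]
      exact hp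
    rw [← encard_sdiff_singleton_add_one ha, ← hinj.encard_image]
    exact add_le_add_left (encard_le_encard himage) 1
  have hTk : T.encard + 1 ≤ k := by
    have := hTt.trans_lt (by exact_mod_cast hlen : (t.length : ℕ∞) < k)
    exact Order.add_one_le_of_lt this
  have hTfin : T.encard ≠ ⊤ := ne_top_of_le_ne_top (ENat.natCast_ne_top _) hTt
  have : T.encard + 1 ≤ T.encard :=
    calc T.encard + 1 ≤ min (k : ℕ∞) A.encard := le_min hTk hTA
      _ = min (k : ℕ∞) B.encard := hAB
      _ ≤ B.encard := min_le_right _ _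
      _ ≤ T.encard := hBT
  exact absurd this (ENat.lt_add_one_iff hTfin |>.2 le_rfl).not_ge

section Game

variable {h k : ℕ} {F G : HForest h}

theorem PIso.mono {s t : List (F.α × G.α)} (hst : s ⊆ t) (ht : PIso F G t) : PIso F G s :=
  ⟨fun p hp q hq => ht.1 p (hst hp) q (hst hq), fun p hp => ht.2.1 p (hst hp),
    fun p hp q hq => ht.2.2 p (hst hp) q (hst hq)⟩

theorem PIso.swap {t : List (F.α × G.α)} (ht : PIso F G t) : PIso G F (t.map Prod.swap) := by
  simp only [PIso, List.forall_mem_map, Prod.fst_swap, Prod.snd_swap]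
  exact ⟨fun p hp q hq => (ht.1 p hp q hq).symm, fun p hp i => (ht.2.1 p hp i).symm,
    fun p hp q hq i => (ht.2.2 p hp q hq i).symm⟩

theorem PIso.cons {t : List (F.α × G.α)} (ht : PIso F G t) {a : F.α} {b : G.α}
    (ha : ∀ y, (a, y) ∉ t) (hb : ∀ x, (x, b) ∉ t) (hP : ∀ i, a ∈ F.P i ↔ b ∈ G.P i)
    (hlt_left : ∀ q ∈ t, ∀ i, F.lt i a q.1 ↔ G.lt i b q.2)
    (hlt_right : ∀ q ∈ t, ∀ i, F.lt i q.1 a ↔ G.lt i q.2 b) : PIso F G ((a, b) :: t) := by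
  refine ⟨?_, ?_, ?_⟩ <;> simp only [List.mem_cons, forall_eq_or_imp]
  · refine ⟨⟨by simp, fun q hq => ⟨?_, ?_⟩⟩, fun p hp => ⟨⟨?_, ?_⟩, ht.1 p hp⟩⟩
    · rintro rfl; exact absurd hq (ha _)
    · rintro rfl; exact absurd hq (hb _)
    · rintro rfl; exact absurd hp (ha _)
    · rintro rfl; exact absurd hp (hb _)
  · exact ⟨hP, ht.2.1⟩
  · exact ⟨⟨fun i => iff_of_false F.not_lt_self G.not_lt_self, hlt_left⟩,
      fun p hp => ⟨hlt_right p hp, ht.2.2 p hp⟩⟩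

def ColorPIso (k : ℕ) (F G : HForest h) (t : List (F.α × G.α)) : Prop :=
  PIso F G t ∧
  (∀ p ∈ t, ∀ l, p.1 ∈ F.P l → sig k F (h - l) p.1 = sig k G (h - l) p.2) ∧
  (∀ p ∈ t, ∀ i x, F.lt i x p.1 → ∃ y, (x, y) ∈ t) ∧
  (∀ p ∈ t, ∀ i y, G.lt i y p.2 → ∃ x, (x, y) ∈ t)

theorem ColorPIso.nil : ColorPIso k F G [] := by
  simp [ColorPIso, PIso]

theorem ColorPIso.swap {t : List (F.α × G.α)} (hI : ColorPIso k F G t) :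
    ColorPIso k G F (t.map Prod.swap) := by
  obtain ⟨hiso, hsig, hclosF, hclosG⟩ := hI
  refine ⟨hiso.swap, ?_, ?_, ?_⟩ <;>
    simp only [List.forall_mem_map, Prod.fst_swap, Prod.snd_swap, List.mem_map_swap]
  · exact fun p hp l hl => (hsig p hp l ((hiso.2.1 p hp l).2 hl)).symm
  · exact hclosG
  · exact hclosF

theorem ColorPIso.cons {t : List (F.α × G.α)} (hI : ColorPIso k F G t) {a : F.α} {b : G.α}
    (ha : ∀ y, (a, y) ∉ t) (hb : ∀ x, (x, b) ∉ t) (hP : ∀ i, a ∈ F.P i ↔ b ∈ G.P i)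
    (hsig : ∀ l, a ∈ F.P l → sig k F (h - l) a = sig k G (h - l) b)
    (hpredF : ∀ i x, F.lt i x a → ∃ y, G.lt i y b ∧ (x, y) ∈ t)
    (hpredG : ∀ i y, G.lt i y b → ∃ x, F.lt i x a ∧ (x, y) ∈ t) :
    ColorPIso k F G ((a, b) :: t) := by
  obtain ⟨hiso, hsig', hclosF, hclosG⟩ := hI
  have hlt_left : ∀ q ∈ t, ∀ i, F.lt i a q.1 ↔ G.lt i b q.2 := fun q hq i =>
    iff_of_false (fun hlt => (hclosF q hq i a hlt).elim fun y hy => ha y hy)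
      (fun hlt => (hclosG q hq i b hlt).elim fun x hx => hb x hx)
  have hlt_right : ∀ q ∈ t, ∀ i, F.lt i q.1 a ↔ G.lt i q.2 b := by
    intro q hq i
    constructor
    · intro hlt
      obtain ⟨y, hy, hqy⟩ := hpredF i q.1 hlt
      rwa [(hiso.1 q hq _ hqy).1 rfl]
    · intro hlt
      obtain ⟨x, hx, hxq⟩ := hpredG i q.2 hlt
      rwa [(hiso.1 q hq _ hxq).2 rfl]
  refine ⟨hiso.cons ha hb hP hlt_left hlt_right, ?_, ?_, ?_⟩ <;>
    simp only [List.mem_cons, forall_eq_or_imp]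
  · exact ⟨hsig, hsig'⟩
  · refine ⟨fun i x hx => ?_, fun p hp i x hx => ?_⟩
    · obtain ⟨y, -, hxy⟩ := hpredF i x hx
      exact ⟨y, Or.inr hxy⟩
    · obtain ⟨y, hxy⟩ := hclosF p hp i x hx
      exact ⟨y, Or.inr hxy⟩
  · refine ⟨fun i y hy => ?_, fun p hp i y hy => ?_⟩
    · obtain ⟨x, -, hxy⟩ := hpredG i y hy
      exact ⟨x, Or.inr hxy⟩
    · obtain ⟨x, hxy⟩ := hclosG p hp i y hy
      exact ⟨x, Or.inr hxy⟩

end Game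

section Extension

variable {h k : ℕ} {F G : HForest h}

def TreeSimilar (k : ℕ) (F G : HForest h) : Prop :=
  (∃! r, r ∈ F.P 0) ∧ (∃! r, r ∈ G.P 0) ∧
  (∀ rF rG, rF ∈ F.P 0 → rG ∈ G.P 0 → sig k F h rF = sig k G h rG) ∧
  min (k : ℕ∞) F.junk.encard = min (k : ℕ∞) G.junk.encard

theorem TreeSimilar.symm (H : TreeSimilar k F G) : TreeSimilar k G F :=
  ⟨H.2.1, H.1, fun rG rF hrG hrF => (H.2.2.1 rF rG hrF hrG).symm, H.2.2.2.symm⟩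

theorem ColorPIso.exists_cons_root (H : TreeSimilar k F G) {t : List (F.α × G.α)}
    (hI : ColorPIso k F G t) {a : F.α} (ha : a ∈ F.P 0) (hadom : ∀ y, (a, y) ∉ t) :
    ∃ b, ColorPIso k F G ((a, b) :: t) := by
  obtain ⟨r, hr, -⟩ := H.2.1
  refine ⟨r, hI.cons hadom (fun x hx => ?_) (fun i => ?_) (fun l hl => ?_)
    (fun i x hx => absurd ha (F.not_mem_P_zero_of_lt hx))
    (fun i y hy => absurd hr (G.not_mem_P_zero_of_lt hy))⟩
  · obtain rfl : x = a := H.1.unique ((hI.1.2.1 _ hx 0).2 hr) ha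
    exact hadom r hx
  · rw [F.mem_P_iff ha, G.mem_P_iff hr]
  · obtain rfl := F.level_eq hl ha
    exact H.2.2.1 a r ha hr

theorem ColorPIso.exists_cons_junk (H : TreeSimilar k F G) {t : List (F.α × G.α)}
    (hI : ColorPIso k F G t) {a : F.α} (ha : a ∈ F.junk) (hadom : ∀ y, (a, y) ∉ t)
    (hlen : t.length < k) : ∃ b, ColorPIso k F G ((a, b) :: t) := by
  obtain ⟨b, hb, hbran⟩ := exists_fresh_of_min_encard_eq
    (fun p hp q hq => (hI.1.1 p hp q hq).1) ha hadom H.2.2.2 hlen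
    (fun p hp hpb i hi => hpb i ((hI.1.2.1 p hp i).1 hi))
  exact ⟨b, hI.cons hadom hbran (fun i => iff_of_false (ha i) (hb i))
    (fun l hl => absurd hl (ha l)) (fun i x hx => absurd hx (F.not_lt_of_mem_junk ha))
    (fun i y hy => absurd hy (G.not_lt_of_mem_junk hb))⟩

theorem ColorPIso.exists_cons_child {t : List (F.α × G.α)} (hI : ColorPIso k F G t)
    {l : ℕ} {p a : F.α} {q : G.α} (hpq : (p, q) ∈ t) (hpa : F.lt l p a)
    (hadom : ∀ y, (a, y) ∉ t) (hlen : t.length < k) : ∃ b, ColorPIso k F G ((a, b) :: t) := by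
  obtain ⟨d, hd, rfl⟩ : ∃ d, d + 1 ≤ h ∧ l = h - (d + 1) :=
    ⟨h - (l + 1), by have := F.lt_height_of_lt hpa; omega, by have := F.lt_height_of_lt hpa; omega⟩
  have hchild : ∀ {H : HForest h} {x y : H.α}, H.lt (h - (d + 1)) x y → y ∈ H.P (h - d) := by
    intro H x y hxy
    rw [show h - d = h - (d + 1) + 1 by omega]
    exact (H.dom _ x y hxy).2
  have hsig_pq : sig k F (d + 1) p = sig k G (d + 1) q := by
    have := hI.2.1 _ hpq _ (F.dom _ _ _ hpa).1
    rwa [show h - (h - (d + 1)) = d + 1 by omega] at this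
  set c := sig k F d a
  have hback : ∀ r ∈ t, r.2 ∈ coloredChildren k G d q c → r.1 ∈ coloredChildren k F d p c := by
    rintro r hr ⟨hqr, hrc⟩
    have hpr : F.lt (h - (d + 1)) p r.1 := (hI.1.2.2 _ hpq r hr _).2 hqr
    have := hI.2.1 r hr _ (hchild hpr)
    rw [show h - (h - d) = d by omega, hrc] at this
    exact ⟨hpr, this⟩
  obtain ⟨b, ⟨hqb, hbc⟩, hbran⟩ := exists_fresh_of_min_encard_eq
    (fun p hp q hq => (hI.1.1 p hp q hq).1) (⟨hpa, rfl⟩ : a ∈ coloredChildren k F d p c) hadom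
    (sig_succ_eq_iff.1 hsig_pq c).2 hlen hback
  refine ⟨b, hI.cons hadom hbran (fun i => ?_) (fun l hl => ?_) (fun i x hx => ?_)
    (fun i y hy => ?_)⟩
  · rw [F.mem_P_iff (hchild hpa), G.mem_P_iff (hchild hqb)]
  · obtain rfl := F.level_eq hl (hchild hpa)
    rw [show h - (h - d) = d by omega]
    exact hbc.symm
  · obtain ⟨rfl, rfl⟩ := F.eq_of_lt_of_lt hx hpa
    exact ⟨q, hqb, hpq⟩
  · obtain ⟨rfl, rfl⟩ := G.eq_of_lt_of_lt hy hqb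
    exact ⟨p, hpa, hpq⟩

theorem ColorPIso.exists_extension_of_mem_P (H : TreeSimilar k F G) :
    ∀ l {t : List (F.α × G.α)}, ColorPIso k F G t → t.length + l + 1 ≤ k → ∀ a ∈ F.P l,
      ∃ b t', ColorPIso k F G t' ∧ (a, b) ∈ t' ∧ t ⊆ t' ∧ t'.length ≤ t.length + l + 1 := by
  intro l
  induction l with
  | zero =>
    intro t hI hlen a ha
    by_cases hdom : ∃ b, (a, b) ∈ t
    · obtain ⟨b, hab⟩ := hdom
      exact ⟨b, t, hI, hab, List.Subset.refl t, by omega⟩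
    · obtain ⟨b, hI'⟩ := hI.exists_cons_root H ha (not_exists.1 hdom)
      exact ⟨b, _, hI', List.mem_cons_self, List.subset_cons_self _ _, by simp⟩
  | succ l ih =>
    intro t hI hlen a ha
    obtain ⟨p, hpa⟩ := F.exists_pred l a ha
    obtain ⟨q, t₁, hI₁, hpq, htt₁, hlen₁⟩ := ih hI (by omega) p (F.dom _ _ _ hpa).1
    by_cases hdom : ∃ b, (a, b) ∈ t₁
    · obtain ⟨b, hab⟩ := hdom
      exact ⟨b, t₁, hI₁, hab, htt₁, by omega⟩
    · obtain ⟨b, hI'⟩ := hI₁.exists_cons_child hpq hpa (not_exists.1 hdom) (by omega)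
      exact ⟨b, _, hI', List.mem_cons_self, List.Subset.trans htt₁ (List.subset_cons_self _ _),
        by simp only [List.length_cons]; omega⟩

theorem ColorPIso.exists_extension (H : TreeSimilar k F G) {t : List (F.α × G.α)}
    (hI : ColorPIso k F G t) (hlen : t.length + (h + 1) ≤ k) (a : F.α) :
    ∃ b t', ColorPIso k F G t' ∧ (a, b) ∈ t' ∧ t ⊆ t' ∧ t'.length ≤ t.length + (h + 1) := by
  by_cases hP : ∃ l, a ∈ F.P l
  · obtain ⟨l, hl⟩ := hP
    have := F.le_height_of_mem_P hl
    obtain ⟨b, t', hI', hab, htt', hlen'⟩ := hI.exists_extension_of_mem_P H l (by omega) a hl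
    exact ⟨b, t', hI', hab, htt', by omega⟩
  · by_cases hdom : ∃ b, (a, b) ∈ t
    · obtain ⟨b, hab⟩ := hdom
      exact ⟨b, t, hI, hab, List.Subset.refl t, by omega⟩
    · obtain ⟨b, hI'⟩ := hI.exists_cons_junk H (not_exists.1 hP) (not_exists.1 hdom) (by omega)
      exact ⟨b, _, hI', List.mem_cons_self, List.subset_cons_self _ _, by simp⟩

theorem ColorPIso.exists_extension_symm (H : TreeSimilar k F G) {t : List (F.α × G.α)}
    (hI : ColorPIso k F G t) (hlen : t.length + (h + 1) ≤ k) (b : G.α) :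
    ∃ a t', ColorPIso k F G t' ∧ (a, b) ∈ t' ∧ t ⊆ t' ∧ t'.length ≤ t.length + (h + 1) := by
  obtain ⟨a, t', hI', hba, htt', hlen'⟩ :=
    hI.swap.exists_extension H.symm (by simpa using hlen) b
  refine ⟨a, t'.map Prod.swap, hI'.swap, List.mem_map_swap _ _ _ |>.2 hba, ?_, by simpa using hlen'⟩
  simpa using List.map_subset Prod.swap htt'

theorem ColorPIso.efWin (H : TreeSimilar k F G) :
    ∀ m {s t : List (F.α × G.α)}, s ⊆ t → ColorPIso k F G t → t.length + m * (h + 1) ≤ k →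
      EFWin F G m s := by
  intro m
  induction m with
  | zero => exact fun hst hI _ => hI.1.mono hst
  | succ m ih =>
    intro s t hst hI hlen
    rw [add_one_mul, ← add_assoc] at hlen
    refine ⟨hI.1.mono hst, fun a => ?_, fun b => ?_⟩
    · obtain ⟨b, t', hI', hab, htt', hlen'⟩ := hI.exists_extension H (by omega) a
      exact ⟨b, ih (List.cons_subset.2 ⟨hab, List.Subset.trans hst htt'⟩) hI' (by omega)⟩
    · obtain ⟨a, t', hI', hab, htt', hlen'⟩ := hI.exists_extension_symm H (by omega) b
      exact ⟨a, ih (List.cons_subset.2 ⟨hab, List.Subset.trans hst htt'⟩) hI' (by omega)⟩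

theorem TreeSimilar.efWin (H : TreeSimilar k F G) {n : ℕ} (hn : n * (h + 1) ≤ k) :
    EFWin F G n [] :=
  ColorPIso.efWin H n (List.nil_subset _) ColorPIso.nil (by simpa using hn)

end Extension

section Prune

variable {h : ℕ} (M : HForest h) (K : ℕ)

def keptAt : ℕ → Set M.α
  | 0 => M.P 0
  | l + 1 => {z | ∃ p ∈ keptAt l, M.lt l p z ∧
      z ∈ capSubset (coloredChildren K M (h - (l + 1)) p (sig K M (h - (l + 1)) z)) (K + 1)}

def prunedSet : Set M.α := (⋃ l, keptAt M K l) ∪ capSubset M.junk (K + 1)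

variable {M K}

theorem keptAt_subset_P : ∀ l, keptAt M K l ⊆ M.P l
  | 0 => subset_rfl
  | l + 1 => fun _ ⟨_, _, hpz, _⟩ => (M.dom l _ _ hpz).2

theorem mem_keptAt_of_mem_prunedSet {x : M.α} {l : ℕ} (hx : x ∈ prunedSet M K)
    (hxl : x ∈ M.P l) : x ∈ keptAt M K l := by
  rcases hx with hx | hx
  · obtain ⟨l', hl'⟩ := mem_iUnion.1 hx
    rwa [M.level_eq hxl (keptAt_subset_P l' hl')]
  · exact absurd hxl (capSubset_subset _ _ hx l)

theorem prunedSet_parent_closed (i : ℕ) (x y : M.α) (hxy : M.lt i x y)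
    (hy : y ∈ prunedSet M K) : x ∈ prunedSet M K := by
  obtain ⟨p, hp, hpy, -⟩ := mem_keptAt_of_mem_prunedSet hy (M.dom i x y hxy).2
  rw [M.unique_pred i x p y hxy hpy]
  exact Or.inl (mem_iUnion.2 ⟨i, hp⟩)

variable (M K) in
def prune : HForest h := M.restrict (prunedSet M K) prunedSet_parent_closed

theorem keptAt_finite (hM : ∃! r, r ∈ M.P 0) : ∀ l, (keptAt M K l).Finite
  | 0 => Subsingleton.finite fun _ hx _ hy => hM.unique hx hy
  | l + 1 => by
    refine ((keptAt_finite hM l).biUnion fun p _ =>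
      (finite_range_sig K M (h - (l + 1))).biUnion fun c _ =>
        capSubset_finite (coloredChildren K M _ p c) (K + 1)).subset ?_
    rintro z ⟨p, hp, -, hz⟩
    exact mem_biUnion hp (mem_biUnion ⟨z, rfl⟩ hz)

theorem prunedSet_finite (hM : ∃! r, r ∈ M.P 0) : (prunedSet M K).Finite := by
  refine Finite.union (((finite_Iic h).biUnion fun l _ => keptAt_finite (K := K) hM l).subset ?_)
    (capSubset_finite _ _)
  exact iUnion_subset fun l x hx => mem_biUnion (M.le_height_of_mem_P (keptAt_subset_P l hx)) hx

theorem prunedSet_inter_coloredChildren {d : ℕ} (hd : d < h) {x : M.α}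
    (hx : x ∈ prunedSet M K) (hxP : x ∈ M.P (h - (d + 1))) (c : ColorSig d) :
    prunedSet M K ∩ coloredChildren K M d x c = capSubset (coloredChildren K M d x c) (K + 1) := by
  have hdepth : h - (h - (d + 1) + 1) = d := by omega
  ext z
  constructor
  · rintro ⟨hz, hxz, hzc⟩
    obtain ⟨p, -, hpz, hzcap⟩ := mem_keptAt_of_mem_prunedSet hz (M.dom _ _ _ hxz).2
    obtain rfl := M.unique_pred _ _ _ _ hpz hxz
    rwa [hdepth, hzc] at hzcap
  · intro hz
    obtain ⟨hxz, hzc⟩ := capSubset_subset _ _ hz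
    refine ⟨Or.inl (mem_iUnion.2 ⟨h - (d + 1) + 1, x, mem_keptAt_of_mem_prunedSet hx hxP, hxz, ?_⟩), hxz, hzc⟩
    rwa [hdepth, hzc]

theorem sig_prune_of_mem_P_zero {r : (prune M K).α} (hr : r ∈ (prune M K).P 0) :
    sig K (prune M K) h r = sig K M h r.1 :=
  sig_restrict K prunedSet_parent_closed
    (fun d hd x hx hxP c => by
      rw [prunedSet_inter_coloredChildren hd hx hxP, encard_capSubset, ← min_assoc, min_self])
    h le_rfl r.1 r.2 (by rwa [Nat.sub_self])

theorem existsUnique_prune_P_zero (hM : ∃! r, r ∈ M.P 0) : ∃! r, r ∈ (prune M K).P 0 := by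
  obtain ⟨r, hr, hru⟩ := hM
  exact ⟨⟨r, Or.inl (mem_iUnion.2 ⟨0, hr⟩)⟩, hr, fun y hy => Subtype.ext (hru y.1 hy)⟩

theorem encard_junk_prune : (prune M K).junk.encard = min ((K + 1 : ℕ) : ℕ∞) M.junk.encard := by
  rw [prune, HForest.encard_junk_restrict, ← encard_capSubset]
  congr 1
  refine Subset.antisymm (fun x ⟨hx, hxJ⟩ => ?_) fun x hx => ⟨Or.inr hx, capSubset_subset _ _ hx⟩
  rcases hx with hx | hx
  · obtain ⟨l, hl⟩ := mem_iUnion.1 hx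
    exact absurd (keptAt_subset_P l hl) (hxJ l)
  · exact hx

theorem treeSimilar_prune (hM : ∃! r, r ∈ M.P 0) : TreeSimilar K M (prune M K) := by
  refine ⟨hM, existsUnique_prune_P_zero hM, fun rM rY hrM hrY => ?_, ?_⟩
  · rw [sig_prune_of_mem_P_zero hrY, hM.unique hrM hrY]
  · rw [encard_junk_prune, min_coe_min_succ]

end Prune

theorem colorOf_of_mem_P_zero {h : ℕ} (k : ℕ) {F : HForest h} {r : F.α} (hr : r ∈ F.P 0) :
    colorOf k F r = some ⟨⟨0, h.succ_pos⟩, sig k F h r⟩ := by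
  have hex : ∃ l : Fin (h + 1), r ∈ F.P l := ⟨⟨0, h.succ_pos⟩, hr⟩
  have hchoose : hex.choose = ⟨0, h.succ_pos⟩ := Fin.ext (F.level_eq hex.choose_spec hr)
  rw [colorOf]
  refine (dif_pos hex).trans ?_
  rw [hchoose]
  rfl

theorem ef_approx_by_finite_tree_general (h n : ℕ) (M : HForest h)
    (htree : ∃! r, r ∈ M.P 0) :
    ∃ Y : HForest h, Finite Y.α ∧ (∃! r, r ∈ Y.P 0) ∧
      (∀ rM rY, rM ∈ M.P 0 → rY ∈ Y.P 0 →
        colorOf (n * (h + 1)) M rM = colorOf (n * (h + 1)) Y rY) ∧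
      EFWin M Y n [] := by
  have hsim := treeSimilar_prune (K := n * (h + 1)) htree
  refine ⟨prune M (n * (h + 1)), (prunedSet_finite htree).to_subtype, hsim.2.1,
    fun rM rY hrM hrY => ?_, hsim.efWin le_rfl⟩
  rw [colorOf_of_mem_P_zero _ hrM, colorOf_of_mem_P_zero _ hrY, hsim.2.2.1 rM rY hrM hrY]

/-- fix `h > 0`, `n ∈ ω`, `k = n(h+1)`.  For every `h`-tree `M` (a single-rooted
`h`-forest, possibly infinite) there is a finite `h`-tree `Y` whose root has the same
`(k,h)`-color as the root of `M`, such that Duplicator wins the `n`-round EF game between `M`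
and `Y` over `L_h`. -/
theorem ef_approx_by_finite_tree (h n : ℕ) (hh : 0 < h) (M : HForest h)
    (htree : ∃! r, r ∈ M.P 0) :
    ∃ Y : HForest h, Finite Y.α ∧ (∃! r, r ∈ Y.P 0) ∧
      (∀ rM rY, rM ∈ M.P 0 → rY ∈ Y.P 0 →
        colorOf (n * (h + 1)) M rM = colorOf (n * (h + 1)) Y rY) ∧
      EFWin M Y n [] :=
  ef_approx_by_finite_tree_general h n M htree
end

section
/- Trees of finite height, considered as structures in the language with a single binary relation Pred (immediate predecessor), are pseudofinite: every first-order sentence true in some finite-height tree is true in some finite tree. -/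
open FirstOrder Language

/-- The language with a single binary relation `Pred`. -/
def LPred : FirstOrder.Language where
  Functions := fun _ => Empty
  Relations := fun n => match n with
    | 2 => Unit
    | _ => Empty

/-- The interpretation of `Pred`: `x` is the immediate predecessor of `y`. -/
def predOn {M : Type*} (s : LPred.Structure M) (x y : M) : Prop :=
  s.RelMap (show LPred.Relations 2 from ()) ![x, y]

/-- `M` is a tree in the language `{Pred}`: there is a unique root (an element with no
predecessor), every element with a predecessor has a unique one, and every element is reachable
from the root by finitely many `Pred`-steps. -/
def IsPredTree (M : Type*) (s : LPred.Structure M) : Prop :=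
  (∃! r : M, ¬∃ y, predOn s y r) ∧
  (∀ x : M, (∃ y, predOn s y x) → ∃! y, predOn s y x) ∧
  (∀ r x : M, (¬∃ y, predOn s y r) → Relation.ReflTransGen (predOn s) r x)

/-- `M` has height at most `h`: there is no `Pred`-chain with `h + 1` edges. -/
def PredHeightLe (M : Type*) (s : LPred.Structure M) (h : ℕ) : Prop :=
  ∀ g : Fin (h + 2) → M, ¬∀ i : Fin (h + 1), predOn s (g i.castSucc) (g i.succ)

/-!
An Ehrenfeucht–Fraïssé argument. With a threshold `n`, the type of depth `j + 1` of a node records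
its type of depth `j` and, for each type of depth `j`, how many of its children have that type,
counted up to `n`. For a sentence of quantifier depth `q` true in a tree of height at most `h`,
put `D = q (h + 1)` and `n = D + 1`, and prune the tree from the root down: below a kept node of
level `ℓ` keep, for each type of depth `D - (ℓ + 1)`, at most `n` children of that type (all of
them if there are fewer). There are finitely many types, so the pruned tree is finite, and a kept
node of level `ℓ` keeps its type of depth `D - ℓ`.

Duplicator then wins the `q`-round game between the two trees. A position is a finite partial
bijection, closed under parents, between nodes with equal types of depth `j`, of size at most
`n - j`. To answer a move we first match the ancestors of the chosen node, one level at a time,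
and each level uses up one unit of depth: this is why `D = q (h + 1)`. The size bound ensures that
among the at most `n` counted children of the required type some child is still unmatched.
-/

open Set

section TruncatedCount

variable {α β ι : Type*}

theorem ENat.min_add_min (n a b : ℕ∞) : min n (min n a + min n b) = min n (a + b) := by
  rcases le_total a n with ha | ha <;> rcases le_total b n with hb | hb <;>
    simp [ha, hb, le_add_right, le_add_left]

theorem min_encard_union_congr {n : ℕ∞} {s s' : Set α} {t t' : Set β} (hs : Disjoint s s')
    (ht : Disjoint t t') (h : min n s.encard = min n t.encard)
    (h' : min n s'.encard = min n t'.encard) :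
    min n (s ∪ s').encard = min n (t ∪ t').encard := by
  rw [encard_union_eq hs, encard_union_eq ht, ← ENat.min_add_min, h, h', ENat.min_add_min]

theorem min_encard_inter_preimage_congr {n : ℕ∞} {A : Set α} {B : Set β} {f : α → ι}
    {g : β → ι} (h : ∀ i, min n (A ∩ f ⁻¹' {i}).encard = min n (B ∩ g ⁻¹' {i}).encard)
    {S : Set ι} (hS : S.Finite) : min n (A ∩ f ⁻¹' S).encard = min n (B ∩ g ⁻¹' S).encard := by
  induction S, hS using Set.Finite.induction_on with
  | empty => simp
  | @insert i S hi _ ih =>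
    have hA := ((disjoint_singleton_left.mpr hi).preimage f).mono
      (inter_subset_right (s := A)) (inter_subset_right (s := A))
    have hB := ((disjoint_singleton_left.mpr hi).preimage g).mono
      (inter_subset_right (s := B)) (inter_subset_right (s := B))
    simp only [insert_eq, preimage_union, inter_union_distrib_left]
    exact min_encard_union_congr hA hB (h i) ih

theorem exists_finite_subset_min_encard_inter_preimage_eq [Finite ι] (n : ℕ) (B : Set α)
    (f : α → ι) : ∃ A ⊆ B, A.Finite ∧
      ∀ i, min (n : ℕ∞) (A ∩ f ⁻¹' {i}).encard = min (n : ℕ∞) (B ∩ f ⁻¹' {i}).encard := by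
  choose A hAB hA using fun i =>
    exists_subset_encard_eq (min_le_right (n : ℕ∞) (B ∩ f ⁻¹' {i}).encard)
  have hA_fiber : ∀ i, (⋃ i', A i') ∩ f ⁻¹' {i} = A i := by
    intro i
    ext x
    simp only [mem_inter_iff, mem_iUnion, mem_preimage, mem_singleton_iff]
    constructor
    · rintro ⟨⟨i', hx⟩, rfl⟩
      rwa [show i' = f x from ((hAB i' hx).2 : f x = i').symm] at hx
    · intro hx
      exact ⟨⟨i, hx⟩, (hAB i hx).2⟩
  refine ⟨⋃ i, A i, iUnion_subset fun i => (hAB i).trans inter_subset_left,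
    finite_iUnion fun i => finite_of_encard_le_coe ((hA i).trans_le (min_le_left _ _)), ?_⟩
  intro i
  rw [hA_fiber, hA, ← min_assoc, min_self]

theorem exists_mem_notMem_image_snd {n : ℕ} {P : Set (α × β)} (hfst : InjOn Prod.fst P)
    (hsnd : InjOn Prod.snd P) {A : Set α} {B : Set β} (hBA : ∀ p ∈ P, p.2 ∈ B → p.1 ∈ A)
    (hAB : min (n : ℕ∞) A.encard = min (n : ℕ∞) B.encard) (hP : P.encard + 1 ≤ n) {c : α}
    (hcA : c ∈ A) (hcP : c ∉ Prod.fst '' P) : ∃ d ∈ B, d ∉ Prod.snd '' P := by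
  set Q := P ∩ Prod.snd ⁻¹' B
  have hused_le : (A ∩ Prod.fst '' P).encard ≤ P.encard :=
    (encard_le_encard inter_subset_right).trans (encard_image_le _ _)
  have hused_ne_top : (A ∩ Prod.fst '' P).encard ≠ ⊤ := fun h => by
    rw [h, top_le_iff] at hused_le
    simp [hused_le] at hP
  have hQ : (Prod.snd '' Q).encard ≤ (A ∩ Prod.fst '' P).encard := by
    rw [(hsnd.mono inter_subset_left).encard_image, ← (hfst.mono inter_subset_left).encard_image]
    exact encard_le_encard fun a ⟨p, hpQ, hpa⟩ => hpa ▸ ⟨hBA p hpQ.1 hpQ.2, p, hpQ.1, rfl⟩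
  have hused_lt : (A ∩ Prod.fst '' P).encard + 1 ≤ min (n : ℕ∞) B.encard := by
    rw [← hAB]
    refine le_min ((by gcongr : _ + 1 ≤ P.encard + 1).trans hP) ?_
    rw [← encard_insert_of_notMem fun h => hcP h.2]
    exact encard_le_encard (insert_subset hcA inter_subset_left)
  by_contra! hB
  have hBQ : B ⊆ Prod.snd '' Q := fun d hd => by
    obtain ⟨p, hp, rfl⟩ := hB d hd
    exact ⟨p, ⟨hp, hd⟩, rfl⟩
  have := (hused_lt.trans (min_le_right _ _)).trans ((encard_le_encard hBQ).trans hQ)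
  exact (ENat.lt_add_one_iff hused_ne_top).2 le_rfl |>.not_ge this

end TruncatedCount

structure LeveledTree (α : Type*) (h : ℕ) where
  root : α
  par : α → α
  lev : α → ℕ
  par_root : par root = root
  lev_eq_zero_iff : ∀ x, lev x = 0 ↔ x = root
  lev_eq_lev_par_add_one : ∀ x, x ≠ root → lev x = lev (par x) + 1
  lev_le : ∀ x, lev x ≤ h

namespace LeveledTree

variable {α : Type*} {h : ℕ}

def Pred (T : LeveledTree α h) (x y : α) : Prop := y ≠ T.root ∧ T.par y = x

def children (T : LeveledTree α h) (x : α) : Set α := {y | T.Pred x y}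

@[simp]
theorem lev_root (T : LeveledTree α h) : T.lev T.root = 0 := (T.lev_eq_zero_iff _).2 rfl

theorem lev_of_pred {T : LeveledTree α h} {x y : α} (hxy : T.Pred x y) :
    T.lev y = T.lev x + 1 := by
  rw [T.lev_eq_lev_par_add_one y hxy.1, hxy.2]

abbrev toStructure (T : LeveledTree α h) : LPred.Structure α where
  funMap := fun f => Empty.elim f
  RelMap := fun {n} R v =>
    match n, R with
    | 2, _ => T.Pred (v 0) (v 1)
    | 0, r | 1, r | _ + 3, r => Empty.elim r

theorem predOn_toStructure (T : LeveledTree α h) : predOn T.toStructure = T.Pred := rfl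

theorem reflTransGen_pred_root (T : LeveledTree α h) (x : α) :
    Relation.ReflTransGen T.Pred T.root x := by
  induction hk : T.lev x generalizing x with
  | zero => rw [(T.lev_eq_zero_iff x).1 hk]
  | succ k ih =>
    have hx : x ≠ T.root := fun hx => by simp [hx] at hk
    exact (ih (T.par x) (by have := T.lev_eq_lev_par_add_one x hx; omega)).tail ⟨hx, rfl⟩

theorem isPredTree_toStructure (T : LeveledTree α h) : IsPredTree α T.toStructure := by
  rw [IsPredTree, predOn_toStructure]
  have hroot : ∀ x, (¬∃ y, T.Pred y x) ↔ x = T.root :=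
    fun x => ⟨fun hx => by_contra fun hne => hx ⟨T.par x, hne, rfl⟩, fun hx ⟨_, hy⟩ => hy.1 hx⟩
  simp_rw [hroot]
  exact ⟨existsUnique_eq, fun x ⟨y, hy⟩ => ⟨y, hy, fun z hz => hz.2.symm.trans hy.2⟩,
    fun r x hr => hr ▸ T.reflTransGen_pred_root x⟩

open Classical in
noncomputable def ofPar (r : α) (par : α → α) (hr : par r = r) (hh : ∀ x, par^[h] x = r) :
    LeveledTree α h where
  root := r
  par := par
  lev x := Nat.find (⟨h, hh x⟩ : ∃ k, par^[k] x = r)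
  par_root := hr
  lev_eq_zero_iff x := by simp
  lev_eq_lev_par_add_one x hx := Nat.find_comp_succ _ ⟨h, hh (par x)⟩ (by simpa using hx)
  lev_le x := Nat.find_min' _ (hh x)

theorem pred_ofPar {r : α} {par : α → α} {hr : par r = r} {hh : ∀ x, par^[h] x = r}
    {x y : α} : (ofPar r par hr hh).Pred x y ↔ y ≠ r ∧ par y = x := Iff.rfl

end LeveledTree

theorem PredHeightLe.iterate_eq {M : Type*} {s : LPred.Structure M} {h : ℕ}
    (hh : PredHeightLe M s h) {r : M} {par : M → M} (hr : par r = r)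
    (hpar : ∀ x, x ≠ r → predOn s (par x) x) (x : M) : par^[h] x = r := by
  by_contra hx
  have hne : ∀ k ≤ h, par^[k] x ≠ r := fun k hk hk' => hx <| by
    rw [← Nat.sub_add_cancel hk, Function.iterate_add_apply, hk', Function.iterate_fixed hr]
  refine hh (fun i => par^[h + 1 - i] x) fun i => ?_
  have hi : h + 1 - i.castSucc = h - i + 1 := by simp only [Fin.val_castSucc]; omega
  have hi' : h + 1 - i.succ = h - i := by simp only [Fin.val_succ]; omega
  simp only [hi, hi', Function.iterate_succ_apply']
  exact hpar _ (hne _ (Nat.sub_le _ _))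

theorem IsPredTree.exists_leveledTree {M : Type*} {s : LPred.Structure M} (hT : IsPredTree M s)
    {h : ℕ} (hh : PredHeightLe M s h) : ∃ T : LeveledTree M h, predOn s = T.Pred := by
  classical
  obtain ⟨⟨r, hr, hr_unique⟩, hpred_unique, -⟩ := hT
  let par (x : M) : M := if hx : ∃ y, predOn s y x then hx.choose else r
  have hpar_pred : ∀ x, x ≠ r → predOn s (par x) x := fun x hx => by
    have hx' : ∃ y, predOn s y x := by_contra fun h' => hx (hr_unique x h')
    simpa [par, hx'] using hx'.choose_spec
  have hpred_iff : ∀ x y, predOn s x y ↔ y ≠ r ∧ par y = x := fun x y =>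
    ⟨fun hxy => have hy : y ≠ r := fun hy => hr ⟨x, hy ▸ hxy⟩
      ⟨hy, (hpred_unique y ⟨x, hxy⟩).unique (hpar_pred y hy) hxy⟩,
    fun ⟨hy, hxy⟩ => hxy ▸ hpar_pred y hy⟩
  have hpar_r : par r = r := by simp [par, hr]
  exact ⟨.ofPar r par hpar_r (hh.iterate_eq hpar_r hpar_pred), by
    ext x y; exact (hpred_iff x y).trans LeveledTree.pred_ofPar.symm⟩

noncomputable def truncCard {α : Type*} (n : ℕ) (s : Set α) : Fin (n + 1) :=
  ⟨(min (n : ℕ∞) s.encard).toNat,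
    Nat.lt_succ_of_le (ENat.toNat_le_of_le_natCast (min_le_left _ _))⟩

theorem truncCard_eq_truncCard_iff {α β : Type*} {n : ℕ} {s : Set α} {t : Set β} :
    truncCard n s = truncCard n t ↔ min (n : ℕ∞) s.encard = min (n : ℕ∞) t.encard := by
  have hne : ∀ x : ℕ∞, min (n : ℕ∞) x ≠ ⊤ :=
    fun x => ne_top_of_le_ne_top (by simp) (min_le_left _ _)
  rw [truncCard, truncCard, Fin.mk.injEq]
  exact ⟨fun h => by rw [← ENat.natCast_toNat (hne _), h, ENat.natCast_toNat (hne _)],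
    congrArg ENat.toNat⟩

def TruncType (n : ℕ) : ℕ → Type
  | 0 => Unit
  | j + 1 => TruncType n j × (TruncType n j → Fin (n + 1))

instance TruncType.finite (n : ℕ) : ∀ j, Finite (TruncType n j)
  | 0 => inferInstanceAs (Finite Unit)
  | j + 1 => have := TruncType.finite n j; inferInstanceAs (Finite (_ × (_ → _)))

namespace LeveledTree

variable {α β : Type*} {h : ℕ}

noncomputable def truncType (T : LeveledTree α h) (n : ℕ) : (j : ℕ) → α → TruncType n j
  | 0, _ => ()
  | j + 1, x =>
    (T.truncType n j x, fun t => truncCard n (T.children x ∩ T.truncType n j ⁻¹' {t}))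

theorem truncType_succ_eq_iff {T : LeveledTree α h} {U : LeveledTree β h} {n j : ℕ} {x : α}
    {y : β} : T.truncType n (j + 1) x = U.truncType n (j + 1) y ↔
      T.truncType n j x = U.truncType n j y ∧
        ∀ t, min (n : ℕ∞) (T.children x ∩ T.truncType n j ⁻¹' {t}).encard =
          min (n : ℕ∞) (U.children y ∩ U.truncType n j ⁻¹' {t}).encard :=
  Prod.ext_iff.trans <| and_congr_right fun _ =>
    funext_iff.trans <| forall_congr' fun _ => truncCard_eq_truncCard_iff

theorem truncType_eq_of_le {T : LeveledTree α h} {U : LeveledTree β h} {n j j' : ℕ}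
    (hj : j ≤ j') {x : α} {y : β} (hxy : T.truncType n j' x = U.truncType n j' y) :
    T.truncType n j x = U.truncType n j y := by
  induction hj with
  | refl => exact hxy
  | step _ ih => exact ih (truncType_succ_eq_iff.1 hxy).1

/-- A position of the back-and-forth game with `j` units of type depth left. Each unit spent
matches one more child, and the bound on `P.encard + j` keeps one of the `n` counted children of
the required type unmatched. -/
structure PartialIso (n : ℕ) (T : LeveledTree α h) (U : LeveledTree β h) (j : ℕ)
    (P : Set (α × β)) : Prop where
  root_mem : (T.root, U.root) ∈ P
  encard_add_le : P.encard + j ≤ n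
  truncType_eq : ∀ p ∈ P, T.truncType n j p.1 = U.truncType n j p.2
  par_mem : ∀ p ∈ P, (T.par p.1, U.par p.2) ∈ P
  injOn_fst : InjOn Prod.fst P
  injOn_snd : InjOn Prod.snd P

namespace PartialIso

variable {n j : ℕ} {T : LeveledTree α h} {U : LeveledTree β h} {P : Set (α × β)}

theorem singleton_root (hj : j + 1 ≤ n)
    (hroot : T.truncType n j T.root = U.truncType n j U.root) :
    PartialIso n T U j {(T.root, U.root)} where
  root_mem := rfl
  encard_add_le := by rw [encard_singleton, add_comm]; exact_mod_cast hj
  truncType_eq := by rintro _ rfl; exact hroot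
  par_mem := by rintro _ rfl; rw [T.par_root, U.par_root]; rfl
  injOn_fst := injOn_singleton _ _
  injOn_snd := injOn_singleton _ _

theorem root_iff (hP : PartialIso n T U j P) {p : α × β} (hp : p ∈ P) :
    p.1 = T.root ↔ p.2 = U.root :=
  ⟨fun h1 => by rw [hP.injOn_fst hp hP.root_mem h1],
    fun h2 => by rw [hP.injOn_snd hp hP.root_mem h2]⟩

theorem pred_iff (hP : PartialIso n T U j P) {p q : α × β} (hp : p ∈ P) (hq : q ∈ P) :
    T.Pred p.1 q.1 ↔ U.Pred p.2 q.2 := by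
  have hpar := hP.par_mem q hq
  rw [Pred, Pred, ne_eq, ne_eq, hP.root_iff hq]
  refine and_congr_right fun _ => ⟨fun h1 => ?_, fun h2 => ?_⟩
  · exact congrArg Prod.snd (hP.injOn_fst hpar hp h1)
  · exact congrArg Prod.fst (hP.injOn_snd hpar hp h2)

theorem mono (hP : PartialIso n T U j P) {j' : ℕ} (hj : j' ≤ j) : PartialIso n T U j' P where
  root_mem := hP.root_mem
  encard_add_le := le_trans (by gcongr) hP.encard_add_le
  truncType_eq p hp := truncType_eq_of_le hj (hP.truncType_eq p hp)
  par_mem := hP.par_mem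
  injOn_fst := hP.injOn_fst
  injOn_snd := hP.injOn_snd

theorem swap (hP : PartialIso n T U j P) : PartialIso n U T j (Prod.swap '' P) where
  root_mem := ⟨_, hP.root_mem, rfl⟩
  encard_add_le := by rw [Prod.swap_injective.injOn.encard_image]; exact hP.encard_add_le
  truncType_eq := by rintro _ ⟨p, hp, rfl⟩; exact (hP.truncType_eq p hp).symm
  par_mem := by rintro _ ⟨p, hp, rfl⟩; exact ⟨_, hP.par_mem p hp, rfl⟩
  injOn_fst := by
    rintro _ ⟨p, hp, rfl⟩ _ ⟨q, hq, rfl⟩ hpq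
    rw [hP.injOn_snd hp hq hpq]
  injOn_snd := by
    rintro _ ⟨p, hp, rfl⟩ _ ⟨q, hq, rfl⟩ hpq
    rw [hP.injOn_fst hp hq hpq]

theorem exists_insert (hP : PartialIso n T U (j + 1) P) {u : α × β} (hu : u ∈ P) {c : α}
    (hc : T.Pred u.1 c) (hcP : c ∉ Prod.fst '' P) :
    ∃ d, PartialIso n T U j (insert (c, d) P) := by
  set t := T.truncType n j c
  have hPj := hP.mono (Nat.le_succ j)
  obtain ⟨d, ⟨hd, hdt⟩, hdP⟩ := exists_mem_notMem_image_snd hP.injOn_fst hP.injOn_snd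
    (A := T.children u.1 ∩ T.truncType n j ⁻¹' {t})
    (B := U.children u.2 ∩ U.truncType n j ⁻¹' {t})
    (fun p hp ⟨hpu, hpt⟩ => ⟨(hP.pred_iff hu hp).2 hpu, (hPj.truncType_eq p hp).trans hpt⟩)
    ((truncType_succ_eq_iff.1 (hP.truncType_eq u hu)).2 t)
    (le_trans (by gcongr; exact_mod_cast Nat.le_add_left 1 j) hP.encard_add_le)
    ⟨hc, rfl⟩ hcP
  have hcdP : (c, d) ∉ P := fun h => hcP ⟨_, h, rfl⟩
  refine ⟨d, ⟨mem_insert_of_mem _ hP.root_mem, ?_, ?_, ?_, (injOn_insert hcdP).2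
    ⟨hP.injOn_fst, hcP⟩, (injOn_insert hcdP).2 ⟨hP.injOn_snd, hdP⟩⟩⟩
  · calc (insert (c, d) P).encard + j ≤ P.encard + 1 + j := by gcongr; exact encard_insert_le _ _
      _ = P.encard + (j + 1 : ℕ) := by push_cast; ring
      _ ≤ n := hP.encard_add_le
  · rintro p (rfl | hp)
    · exact (mem_singleton_iff.1 hdt).symm
    · exact hPj.truncType_eq p hp
  · rintro p (rfl | hp)
    · exact mem_insert_of_mem _ (by rw [hc.2, hd.2]; exact hu)
    · exact mem_insert_of_mem _ (hP.par_mem p hp)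

theorem exists_superset_mem_fst {a : α} (hP : PartialIso n T U (j + T.lev a) P) :
    ∃ P' ⊇ P, PartialIso n T U j P' ∧ ∃ b, (a, b) ∈ P' := by
  induction hk : T.lev a generalizing a j with
  | zero =>
    rw [(T.lev_eq_zero_iff a).1 hk]
    exact ⟨P, subset_rfl, hP.mono (by omega), U.root, hP.root_mem⟩
  | succ k ih =>
    have ha : a ≠ T.root := fun ha => by simp [ha] at hk
    have hpar : T.lev (T.par a) = k := by have := T.lev_eq_lev_par_add_one a ha; omega
    obtain ⟨P₁, hPP₁, hP₁, b, hb⟩ :=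
      ih (j := j + 1) (by rwa [hpar, add_assoc, add_comm 1 k, ← hk]) hpar
    by_cases haP₁ : a ∈ Prod.fst '' P₁
    · obtain ⟨⟨_, b'⟩, hab', rfl⟩ := haP₁
      exact ⟨P₁, hPP₁, hP₁.mono (Nat.le_succ j), b', hab'⟩
    · obtain ⟨d, hd⟩ := hP₁.exists_insert (u := (T.par a, b)) hb ⟨ha, rfl⟩ haP₁
      exact ⟨_, hPP₁.trans (subset_insert _ _), hd, d, mem_insert _ _⟩

theorem forth (hP : PartialIso n T U (j + h) P) (a : α) :
    ∃ P' ⊇ P, PartialIso n T U j P' ∧ ∃ b, (a, b) ∈ P' :=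
  (hP.mono (Nat.add_le_add_left (T.lev_le a) j)).exists_superset_mem_fst

theorem back (hP : PartialIso n T U (j + h) P) (b : β) :
    ∃ P' ⊇ P, PartialIso n T U j P' ∧ ∃ a, (a, b) ∈ P' := by
  obtain ⟨Q, hPQ, hQ, a, hba⟩ := hP.swap.forth b
  exact ⟨Prod.swap '' Q, fun p hp => ⟨p.swap, hPQ ⟨p, hp, rfl⟩, p.swap_swap⟩, hQ.swap, a,
    ⟨_, hba, rfl⟩⟩

end PartialIso

end LeveledTree

namespace FirstOrder.Language.BoundedFormula

variable {L : Language} {α : Type*}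

def quantifierDepth : ∀ {n}, L.BoundedFormula α n → ℕ
  | _, falsum => 0
  | _, equal _ _ => 0
  | _, rel _ _ => 0
  | _, imp f g => max f.quantifierDepth g.quantifierDepth
  | _, all f => f.quantifierDepth + 1

end FirstOrder.Language.BoundedFormula

theorem LPred.term_eq_var {m : ℕ} : ∀ t : LPred.Term (Empty ⊕ Fin m), ∃ i, t = var (Sum.inr i)
  | .var (Sum.inl e) => e.elim
  | .var (Sum.inr i) => ⟨i, rfl⟩
  | .func f _ => Empty.elim f

theorem LPred.realize_rel {M : Type*} [s : LPred.Structure M] {m : ℕ} (R : LPred.Relations 2)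
    (i₁ i₂ : Fin m) (e : Empty → M) (xs : Fin m → M) :
    (BoundedFormula.rel R ![var (Sum.inr i₁), var (Sum.inr i₂)]).Realize e xs ↔
      predOn s (xs i₁) (xs i₂) := by
  have hargs : (fun i => (![var (Sum.inr i₁), var (Sum.inr i₂)] i :
      LPred.Term (Empty ⊕ Fin m)).realize (Sum.elim e xs)) = ![xs i₁, xs i₂] := by
    ext i; fin_cases i <;> rfl
  rw [BoundedFormula.Realize, hargs]
  rfl

theorem LeveledTree.PartialIso.realize_iff {α β : Type*} {h n : ℕ} {T : LeveledTree α h}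
    {U : LeveledTree β h} {sT : LPred.Structure α} {sU : LPred.Structure β}
    (hT : predOn sT = T.Pred) (hU : predOn sU = U.Pred) {m : ℕ}
    (φ : LPred.BoundedFormula Empty m) {j : ℕ} (hj : φ.quantifierDepth * (h + 1) ≤ j)
    {P : Set (α × β)} (hP : PartialIso n T U j P) {v : Fin m → α} {w : Fin m → β}
    (hvw : ∀ i, (v i, w i) ∈ P) : φ.Realize default v ↔ φ.Realize default w := by
  induction φ generalizing j P with
  | falsum => rfl
  | equal t₁ t₂ =>
    obtain ⟨i₁, rfl⟩ := LPred.term_eq_var t₁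
    obtain ⟨i₂, rfl⟩ := LPred.term_eq_var t₂
    exact ⟨fun h => congrArg Prod.snd (hP.injOn_fst (hvw i₁) (hvw i₂) h),
      fun h => congrArg Prod.fst (hP.injOn_snd (hvw i₁) (hvw i₂) h)⟩
  | rel R ts =>
    rename_i l
    match l, R with
    | 2, R =>
      obtain ⟨i₁, h₁⟩ := LPred.term_eq_var (ts 0)
      obtain ⟨i₂, h₂⟩ := LPred.term_eq_var (ts 1)
      obtain rfl : ts = ![var (Sum.inr i₁), var (Sum.inr i₂)] := by
        ext i; fin_cases i <;> assumption
      rw [LPred.realize_rel, LPred.realize_rel, hT, hU]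
      exact hP.pred_iff (hvw i₁) (hvw i₂)
  | imp f g ihf ihg =>
    simp only [BoundedFormula.quantifierDepth] at hj
    rw [BoundedFormula.realize_imp, BoundedFormula.realize_imp,
      ihf (le_trans (by gcongr; exact le_max_left _ _) hj) hP hvw,
      ihg (le_trans (by gcongr; exact le_max_right _ _) hj) hP hvw]
  | all f ih =>
    have hP' : PartialIso n T U (f.quantifierDepth * (h + 1) + h) P :=
      hP.mono (by simp only [BoundedFormula.quantifierDepth] at hj; nlinarith)
    have hsnoc : ∀ {P'} (_ : P ⊆ P') {a b} (_ : (a, b) ∈ P') i,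
        ((Fin.snoc v a : Fin (_ + 1) → α) i, (Fin.snoc w b : Fin (_ + 1) → β) i) ∈ P' :=
      fun hPP' _ _ hab i => Fin.lastCases (by simpa using hab)
        (fun i => by simpa using hPP' (hvw i)) i
    rw [BoundedFormula.realize_all, BoundedFormula.realize_all]
    constructor
    · intro hall b
      obtain ⟨P', hPP', hP'', a, hab⟩ := hP'.back b
      exact (ih le_rfl hP'' (hsnoc hPP' hab)).1 (hall a)
    · intro hall a
      obtain ⟨P', hPP', hP'', b, hab⟩ := hP'.forth a
      exact (ih le_rfl hP'' (hsnoc hPP' hab)).2 (hall b)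

namespace LeveledTree

variable {α : Type*} {h : ℕ} (T : LeveledTree α h) (n D : ℕ)

noncomputable def keptChildren (x : α) (j : ℕ) : Set α :=
  (exists_finite_subset_min_encard_inter_preimage_eq n (T.children x) (T.truncType n j)).choose

theorem keptChildren_subset (x : α) (j : ℕ) : T.keptChildren n x j ⊆ T.children x :=
  (exists_finite_subset_min_encard_inter_preimage_eq n (T.children x)
    (T.truncType n j)).choose_spec.1

theorem finite_keptChildren (x : α) (j : ℕ) : (T.keptChildren n x j).Finite :=
  (exists_finite_subset_min_encard_inter_preimage_eq n (T.children x)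
    (T.truncType n j)).choose_spec.2.1

theorem min_encard_keptChildren_inter (x : α) (j : ℕ) (t : TruncType n j) :
    min (n : ℕ∞) (T.keptChildren n x j ∩ T.truncType n j ⁻¹' {t}).encard =
      min (n : ℕ∞) (T.children x ∩ T.truncType n j ⁻¹' {t}).encard :=
  (exists_finite_subset_min_encard_inter_preimage_eq n (T.children x)
    (T.truncType n j)).choose_spec.2.2 t

theorem min_encard_keptChildren_inter_of_le {j j' : ℕ} (hj : j ≤ j') (x : α)
    (t : TruncType n j) :
    min (n : ℕ∞) (T.keptChildren n x j' ∩ T.truncType n j ⁻¹' {t}).encard =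
      min (n : ℕ∞) (T.children x ∩ T.truncType n j ⁻¹' {t}).encard := by
  -- a type of depth `j` is a union of types of depth `j'`
  have hsat : T.truncType n j ⁻¹' {t} =
      T.truncType n j' ⁻¹' (T.truncType n j' '' (T.truncType n j ⁻¹' {t})) := by
    ext y
    refine ⟨fun hy => ⟨y, hy, rfl⟩, fun ⟨z, hz, hzy⟩ => ?_⟩
    exact (truncType_eq_of_le hj hzy.symm).trans hz
  rw [hsat]
  exact min_encard_inter_preimage_congr (T.min_encard_keptChildren_inter n x j') (toFinite _)

/-- Selecting the children of level `ℓ + 1` by their types of depth `D - (ℓ + 1)` is what makes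
`truncType_pruned` hold whenever `j + ℓ ≤ D`. -/
noncomputable def keptAt : ℕ → Set α
  | 0 => {T.root}
  | ℓ + 1 => ⋃ x ∈ keptAt ℓ, T.keptChildren n x (D - (ℓ + 1))

theorem mem_keptAt_succ_iff {ℓ : ℕ} {y : α} : y ∈ T.keptAt n D (ℓ + 1) ↔
    T.par y ∈ T.keptAt n D ℓ ∧ y ∈ T.keptChildren n (T.par y) (D - (ℓ + 1)) := by
  simp only [keptAt, mem_iUnion, exists_prop]
  refine ⟨fun ⟨x, hx, hy⟩ => ?_, fun hy => ⟨_, hy⟩⟩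
  rw [(T.keptChildren_subset n x _ hy).2]
  exact ⟨hx, hy⟩

theorem finite_keptAt : ∀ ℓ, (T.keptAt n D ℓ).Finite
  | 0 => finite_singleton _
  | ℓ + 1 => (finite_keptAt ℓ).biUnion fun x _ => T.finite_keptChildren n x _

def IsKept (x : α) : Prop := x ∈ T.keptAt n D (T.lev x)

variable {T n D}

theorem isKept_par {x : α} (hx : T.IsKept n D x) : T.IsKept n D (T.par x) := by
  by_cases hroot : x = T.root
  · rwa [hroot, T.par_root, ← hroot]
  · rw [IsKept, T.lev_eq_lev_par_add_one x hroot, mem_keptAt_succ_iff] at hx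
    exact hx.1

theorem isKept_iff_of_pred {x y : α} (hx : T.IsKept n D x) (hxy : T.Pred x y) :
    T.IsKept n D y ↔ y ∈ T.keptChildren n x (D - (T.lev x + 1)) := by
  rw [IsKept, lev_of_pred hxy, mem_keptAt_succ_iff, hxy.2]
  exact and_iff_right hx

instance : Finite {x // T.IsKept n D x} :=
  Finite.to_subtype (s := {x | T.IsKept n D x}) <|
    ((Finset.range (h + 1)).finite_toSet.biUnion fun ℓ _ => T.finite_keptAt n D ℓ).subset
      fun x hx => mem_biUnion (Finset.mem_coe.2 (Finset.mem_range_succ_iff.2 (T.lev_le x))) hx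

variable (T n D)

noncomputable def pruned : LeveledTree {x // T.IsKept n D x} h where
  root := ⟨T.root, by rw [IsKept, lev_root]; exact mem_singleton _⟩
  par x := ⟨T.par x, isKept_par x.2⟩
  lev x := T.lev x
  par_root := Subtype.ext T.par_root
  lev_eq_zero_iff x := by rw [Subtype.ext_iff]; exact T.lev_eq_zero_iff x
  lev_eq_lev_par_add_one x hx := T.lev_eq_lev_par_add_one x fun h => hx (Subtype.ext h)
  lev_le x := T.lev_le x

theorem pred_pruned {x y : {x // T.IsKept n D x}} : (T.pruned n D).Pred x y ↔ T.Pred x y := by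
  simp only [Pred, ne_eq, Subtype.ext_iff]
  rfl

theorem image_val_children_pruned (x : {x // T.IsKept n D x}) :
    Subtype.val '' (T.pruned n D).children x = T.keptChildren n x (D - (T.lev x + 1)) := by
  ext y
  refine ⟨fun ⟨y', hy', hy⟩ => ?_, fun hy => ?_⟩
  · rw [← hy]
    exact (isKept_iff_of_pred x.2 ((pred_pruned T n D).1 hy')).1 y'.2
  · have hxy := T.keptChildren_subset n x _ hy
    exact ⟨⟨y, (isKept_iff_of_pred x.2 hxy).2 hy⟩, (pred_pruned T n D).2 hxy, rfl⟩

theorem truncType_pruned (j : ℕ) (x : {x // T.IsKept n D x}) (hx : j + T.lev x ≤ D) :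
    (T.pruned n D).truncType n j x = T.truncType n j x := by
  induction j generalizing x with
  | zero => rfl
  | succ j ih =>
    refine truncType_succ_eq_iff.2 ⟨ih x (by omega), fun t => ?_⟩
    have hchildren : (T.pruned n D).children x ∩ (T.pruned n D).truncType n j ⁻¹' {t} =
        Subtype.val ⁻¹' (T.truncType n j ⁻¹' {t}) ∩ (T.pruned n D).children x := by
      ext y
      rw [mem_inter_iff, mem_inter_iff, and_comm]
      refine and_congr_left fun hy => ?_
      have hlev := lev_of_pred ((pred_pruned T n D).1 hy)
      rw [mem_preimage, ih y (by omega)]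
      rfl
    rw [hchildren, ← Subtype.val_injective.encard_image, image_preimage_inter,
      image_val_children_pruned, inter_comm]
    exact T.min_encard_keptChildren_inter_of_le n (by omega) x t

end LeveledTree

/-- finite-height trees in the language `{Pred}` are pseudofinite: every sentence
true in some tree of finite height is true in some finite tree. -/
theorem finite_height_trees_pseudofinite_pred (φ : LPred.Sentence)
    (hφ : ∃ (M : Type) (s : LPred.Structure M), IsPredTree M s ∧
      (∃ h : ℕ, PredHeightLe M s h) ∧ @Sentence.Realize LPred M s φ) :
    ∃ (N : Type) (s : LPred.Structure N), IsPredTree N s ∧ Finite N ∧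
      @Sentence.Realize LPred N s φ := by
  obtain ⟨M, s, hM, ⟨h, hh⟩, hφ⟩ := hφ
  obtain ⟨T, hT⟩ := hM.exists_leveledTree hh
  set q := φ.quantifierDepth * (h + 1)
  let U := T.pruned (q + 1) q
  have hP : LeveledTree.PartialIso (q + 1) T U q {(T.root, U.root)} :=
    .singleton_root le_rfl
      (T.truncType_pruned (q + 1) q q U.root (by simp [U, LeveledTree.pruned])).symm
  refine ⟨_, U.toStructure, U.isPredTree_toStructure, inferInstance, ?_⟩
  exact (hP.realize_iff hT U.predOn_toStructure φ le_rfl fun i => i.elim0).1 hφ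
end

section
/- There is a unique model C of the theory T (up to isomorphism) whose domain consists exactly of the interpretations of the constants in C; moreover, C embeds into every model of T. -/
open FirstOrder Language

def L0 : FirstOrder.Language where
  Functions := fun _ => Empty
  Relations := fun n => match n with
    | 1 => ℕ
    | 2 => ℕ
    | _ => Empty

def pRel (i : ℕ) : L0.Relations 1 := i

def ltRel (i : ℕ) : L0.Relations 2 := i

def L0Str {M : Type*} (P : ℕ → M → Prop) (lt : ℕ → M → M → Prop) : L0.Structure M where
  funMap := fun {n} f _ => Empty.elim f
  RelMap := fun {n} => match n with
    | 0 => fun r _ => Empty.elim r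
    | 1 => fun i v => P i (v 0)
    | 2 => fun i v => lt i (v 0) (v 1)
    | (_ + 3) => fun r _ => Empty.elim r

/-- `x` satisfies the predicate `Pᵢ`. -/
def pOn {M : Type*} [L0.Structure M] (i : ℕ) (x : M) : Prop :=
  Structure.RelMap (pRel i) ![x]

/-- `x <ᵢ y`. -/
def ltOn {M : Type*} [L0.Structure M] (i : ℕ) (x y : M) : Prop :=
  Structure.RelMap (ltRel i) ![x, y]

/-- The formula `Pᵢ t`. -/
def pFml {n : ℕ} (i : ℕ) (t : L0.Term (Empty ⊕ Fin n)) : L0.BoundedFormula Empty n :=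
  (pRel i).boundedFormula₁ t

/-- The formula `t₁ <ᵢ t₂`. -/
def ltFml {n : ℕ} (i : ℕ) (t₁ t₂ : L0.Term (Empty ⊕ Fin n)) : L0.BoundedFormula Empty n :=
  (ltRel i).boundedFormula₂ t₁ t₂

/-- `Pᵢ` and `Pⱼ` are disjoint. -/
def axDisj (i j : ℕ) : L0.Sentence := ∀' ((pFml i &0 ⊓ pFml j &0).not)

/-- `<ᵢ ⊆ Pᵢ × Pᵢ₊₁`. -/
def axDom (i : ℕ) : L0.Sentence := ∀' ∀' ((ltFml i &0 &1).imp (pFml i &0 ⊓ pFml (i + 1) &1))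

/-- Existence of predecessors. -/
def axEx (i : ℕ) : L0.Sentence := ∀' ((pFml (i + 1) &0).imp (∃' (pFml i &1 ⊓ ltFml i &1 &0)))

/-- Uniqueness of predecessors. -/
def axUniq (i : ℕ) : L0.Sentence :=
  ∀' ∀' ∀' (((ltFml i &0 &2) ⊓ (ltFml i &1 &2)).imp (Term.bdEqual &0 &1))

/-- The base theory `T₀` of leveled forests. -/
def T0 : L0.Theory :=
  {φ | (∃ i j, i ≠ j ∧ φ = axDisj i j) ∨ (∃ i, φ = axDom i) ∨
    (∃ i, φ = axEx i) ∨ (∃ i, φ = axUniq i)}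

/-- A bundled finite model of `T₀`. -/
structure FinT0Model where
  carrier : Type
  [str : L0.Structure carrier]
  fin : Finite carrier
  models : carrier ⊨ T0

attribute [instance] FinT0Model.str

variable (Ms : ℕ → FinT0Model)

/-- The constants of the theory `T`: for each `i, j ∈ ω`, the block `Cᵢʲ` consists of one constant
for each element of the finite model `Mᵢ`. -/
def ConstT : Type := (i : ℕ) × ℕ × (Ms i).carrier

/-- A model of the theory `T`: an `L₀`-structure together with an interpretation of the constants
`Cᵢʲ`, such that `T₀` holds, the constants are pairwise distinct, each block `Cᵢʲ` is an
`L₀`-substructure isomorphic to `Mᵢ` (via the tautological indexing), and each block is closed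
under every relation `<ₖ` in both directions. -/
structure TModel where
  carrier : Type
  [str : L0.Structure carrier]
  interp : ConstT Ms → carrier
  models0 : carrier ⊨ T0
  interp_inj : Function.Injective interp
  interp_P : ∀ (c : ConstT Ms) (n : ℕ), pOn n (interp c) ↔ pOn n c.2.2
  interp_lt : ∀ (i j : ℕ) (a b : (Ms i).carrier) (n : ℕ),
    ltOn n (interp ⟨i, j, a⟩) (interp ⟨i, j, b⟩) ↔ ltOn n a b
  closed : ∀ (i j : ℕ) (a : (Ms i).carrier) (n : ℕ) (y : carrier),
    ltOn n (interp ⟨i, j, a⟩) y ∨ ltOn n y (interp ⟨i, j, a⟩) →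
      ∃ b : (Ms i).carrier, y = interp ⟨i, j, b⟩

attribute [instance] TModel.str

/-- The interpretation of the language `L₀ ∪ C` (i.e. `L₀` with the constants added) on a model
of `T`. -/
noncomputable def TModel.cStr (M : TModel Ms) : (L0[[ConstT Ms]]).Structure M.carrier :=
  @Language.sumStructure L0 (constantsOn (ConstT Ms)) M.carrier M.str
    (constantsOn.structure M.interp)

/-- The enumeration `Ms` lists all finite models of `T₀` up to isomorphism. -/
def ListsAllFinModels : Prop :=
  ∀ N : FinT0Model, ∃ i, Nonempty (N.carrier ≃[L0] (Ms i).carrier)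

/-! The constants alone already form a model of `T`: put on `ConstT Ms` the disjoint union of the
blocks `Cᵢʲ ≅ Mᵢ`. A disjoint union of leveled forests is a leveled forest, and in any model `M` of
`T` the closure of the blocks under `<ₖ` forces every relation between interpretations of
constants to be the one inside a single block. Hence the interpretation of the constants is an
`L₀`-embedding of this canonical model into `M`, and an isomorphism when it is onto. -/

instance : L0.IsRelational := fun _ => inferInstanceAs (IsEmpty Empty)

namespace FirstOrder.Language.Embedding

variable {L : Language} {M N : Type*} [L.Structure M] [L.Structure N]

noncomputable def equivOfSurjective (f : M ↪[L] N) (hf : Function.Surjective f) : M ≃[L] N :=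
  ⟨Equiv.ofBijective f ⟨f.injective, hf⟩, f.map_fun', f.map_rel'⟩

end FirstOrder.Language.Embedding

structure IsLeveledForest (M : Type*) [L0.Structure M] : Prop where
  disjoint : ∀ i j, i ≠ j → ∀ x : M, pOn i x → ¬pOn j x
  level : ∀ i (x y : M), ltOn i x y → pOn i x ∧ pOn (i + 1) y
  exists_pred : ∀ i (x : M), pOn (i + 1) x → ∃ y, pOn i y ∧ ltOn i y x
  pred_unique : ∀ i (x y z : M), ltOn i x z → ltOn i y z → x = y

section LeveledForest

variable {M : Type*} [L0.Structure M]

theorem realize_axDisj (i j : ℕ) : M ⊨ axDisj i j ↔ ∀ x : M, pOn i x → ¬pOn j x := by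
  simp [axDisj, pFml, pOn, Sentence.Realize, Formula.Realize, Fin.snoc]

theorem realize_axDom (i : ℕ) :
    M ⊨ axDom i ↔ ∀ x y : M, ltOn i x y → pOn i x ∧ pOn (i + 1) y := by
  simp [axDom, pFml, ltFml, pOn, ltOn, Sentence.Realize, Formula.Realize, Fin.snoc]

theorem realize_axEx (i : ℕ) :
    M ⊨ axEx i ↔ ∀ x : M, pOn (i + 1) x → ∃ y, pOn i y ∧ ltOn i y x := by
  simp [axEx, pFml, ltFml, pOn, ltOn, Sentence.Realize, Formula.Realize, Fin.snoc]

theorem realize_axUniq (i : ℕ) :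
    M ⊨ axUniq i ↔ ∀ x y z : M, ltOn i x z → ltOn i y z → x = y := by
  simp [axUniq, ltFml, ltOn, Sentence.Realize, Formula.Realize, Fin.snoc]

theorem model_T0_iff : M ⊨ T0 ↔ IsLeveledForest M := by
  rw [Theory.model_iff]
  constructor
  · intro h
    exact ⟨fun i j hij => (realize_axDisj i j).1 (h _ (Or.inl ⟨i, j, hij, rfl⟩)),
      fun i => (realize_axDom i).1 (h _ (Or.inr (Or.inl ⟨i, rfl⟩))),
      fun i => (realize_axEx i).1 (h _ (Or.inr (Or.inr (Or.inl ⟨i, rfl⟩)))),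
      fun i => (realize_axUniq i).1 (h _ (Or.inr (Or.inr (Or.inr ⟨i, rfl⟩))))⟩
  · rintro ⟨hdisj, hlevel, hpred, huniq⟩ φ (⟨i, j, hij, rfl⟩ | ⟨i, rfl⟩ | ⟨i, rfl⟩ | ⟨i, rfl⟩)
    · exact (realize_axDisj i j).2 (hdisj i j hij)
    · exact (realize_axDom i).2 (hlevel i)
    · exact (realize_axEx i).2 (hpred i)
    · exact (realize_axUniq i).2 (huniq i)

theorem relMap_unary_iff (r : L0.Relations 1) (v : Fin 1 → M) :
    Structure.RelMap r v ↔ pOn r (v 0) := by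
  rw [show v = ![v 0] from funext fun k => by fin_cases k; rfl]
  rfl

theorem relMap_binary_iff (r : L0.Relations 2) (v : Fin 2 → M) :
    Structure.RelMap r v ↔ ltOn r (v 0) (v 1) := by
  rw [show v = ![v 0, v 1] from funext fun k => by fin_cases k <;> rfl]
  rfl

end LeveledForest

theorem FinT0Model.isLeveledForest (N : FinT0Model) : IsLeveledForest N.carrier :=
  model_T0_iff.1 N.models

namespace ConstT

variable {Ms}

theorem mk_injective {i j : ℕ} :
    Function.Injective (fun a : (Ms i).carrier => (⟨i, j, a⟩ : ConstT Ms)) := by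
  intro a b h
  cases h
  rfl

variable (Ms)

def Lt (n : ℕ) (c d : ConstT Ms) : Prop :=
  ∃ b : (Ms c.1).carrier, d = ⟨c.1, c.2.1, b⟩ ∧ ltOn n c.2.2 b

instance instStructure : L0.Structure (ConstT Ms) := L0Str (fun n c => pOn n c.2.2) (Lt Ms)

theorem ltOn_iff (n : ℕ) (c d : ConstT Ms) : ltOn n c d ↔ Lt Ms n c d := Iff.rfl

theorem ltOn_mk_mk_iff (i j : ℕ) (a b : (Ms i).carrier) (n : ℕ) :
    ltOn (M := ConstT Ms) n ⟨i, j, a⟩ ⟨i, j, b⟩ ↔ ltOn n a b := by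
  refine ⟨?_, fun h => ⟨b, rfl, h⟩⟩
  rintro ⟨b', hb, hab⟩
  rwa [mk_injective hb]

theorem isLeveledForest : IsLeveledForest (ConstT Ms) where
  disjoint k l hkl c := (Ms c.1).isLeveledForest.disjoint k l hkl c.2.2
  level := by
    rintro k ⟨i, j, a⟩ d h
    obtain ⟨b, rfl, hab⟩ := (ltOn_iff Ms k _ d).1 h
    exact (Ms i).isLeveledForest.level k a b hab
  exists_pred := by
    rintro k ⟨i, j, a⟩ ha
    obtain ⟨b, hb, hba⟩ := (Ms i).isLeveledForest.exists_pred k a ha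
    exact ⟨⟨i, j, b⟩, hb, a, rfl, hba⟩
  pred_unique := by
    rintro k ⟨i, j, a⟩ ⟨i', j', a'⟩ d h h'
    obtain ⟨c, rfl, hac⟩ := (ltOn_iff Ms k _ d).1 h
    obtain ⟨c', h, hac'⟩ := (ltOn_iff Ms k _ _).1 h'
    cases h
    rw [(Ms i).isLeveledForest.pred_unique k a a' c hac hac']

end ConstT

def constModel : TModel Ms where
  carrier := ConstT Ms
  interp := id
  models0 := model_T0_iff.2 (ConstT.isLeveledForest Ms)
  interp_inj := Function.injective_id
  interp_P _ _ := Iff.rfl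
  interp_lt := ConstT.ltOn_mk_mk_iff Ms
  closed := by
    rintro i j a n d (h | h)
    · obtain ⟨b, rfl, -⟩ := (ConstT.ltOn_iff Ms n _ d).1 h
      exact ⟨b, rfl⟩
    · obtain ⟨b, h, -⟩ := (ConstT.ltOn_iff Ms n d _).1 h
      cases h
      exact ⟨d.2.2, rfl⟩

namespace TModel

variable {Ms} (M : TModel Ms)

theorem ltOn_interp_iff (n : ℕ) (c d : ConstT Ms) :
    ltOn n (M.interp c) (M.interp d) ↔ ltOn n c d := by
  obtain ⟨i, j, a⟩ := c
  constructor
  · intro h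
    obtain ⟨b, hb⟩ := M.closed i j a n (M.interp d) (Or.inl h)
    obtain rfl := M.interp_inj hb
    exact (ConstT.ltOn_mk_mk_iff Ms i j a b n).2 ((M.interp_lt i j a b n).1 h)
  · intro h
    obtain ⟨b, rfl, hab⟩ := (ConstT.ltOn_iff Ms n _ d).1 h
    exact (M.interp_lt i j a b n).2 hab

theorem relMap_interp_iff {n : ℕ} (r : L0.Relations n) (x : Fin n → ConstT Ms) :
    Structure.RelMap r (M.interp ∘ x) ↔ Structure.RelMap r x :=
  match n, r with
  | 1, r => by
    rw [relMap_unary_iff, relMap_unary_iff]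
    exact M.interp_P (x 0) r
  | 2, r => by
    rw [relMap_binary_iff, relMap_binary_iff]
    exact M.ltOn_interp_iff r (x 0) (x 1)

def interpEmbedding : ConstT Ms ↪[L0] M.carrier where
  toFun := M.interp
  inj' := M.interp_inj
  map_fun' f := isEmptyElim f
  map_rel' := M.relMap_interp_iff

end TModel

theorem exists_unique_constant_model_general (Ms : ℕ → FinT0Model) :
    ∃ C : TModel Ms, Function.Surjective C.interp ∧
      (∀ D : TModel Ms, Function.Surjective D.interp →
        ∃ e : C.carrier ≃[L0] D.carrier, ∀ c, e (C.interp c) = D.interp c) ∧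
      (∀ M : TModel Ms,
        ∃ g : C.carrier ↪[L0] M.carrier, ∀ c, g (C.interp c) = M.interp c) :=
  ⟨constModel Ms, Function.surjective_id,
    fun D hD => ⟨D.interpEmbedding.equivOfSurjective hD, fun _ => rfl⟩,
    fun M => ⟨M.interpEmbedding, fun _ => rfl⟩⟩

/-- there is a model `C` of `T`, unique up to isomorphism, whose domain consists
exactly of the interpretations of the constants; moreover `C` embeds into every model of `T`
(as an `L₀ ∪ C`-structure, i.e. by an `L₀`-embedding respecting the constants). -/
theorem exists_unique_constant_model (Ms : ℕ → FinT0Model) (hMs : ListsAllFinModels Ms) :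
    ∃ C : TModel Ms, Function.Surjective C.interp ∧
      (∀ D : TModel Ms, Function.Surjective D.interp →
        ∃ e : C.carrier ≃[L0] D.carrier, ∀ c, e (C.interp c) = D.interp c) ∧
      (∀ M : TModel Ms,
        ∃ g : C.carrier ↪[L0] M.carrier, ∀ c, g (C.interp c) = M.interp c) :=
  exists_unique_constant_model_general Ms
end

section
/- A complete ∃₁-axiomatizable theory in a language consisting only of unary predicates is the theory of a structure in which every consistent finite Boolean combination of the predicates is realized infinitely often; such a theory admits quantifier elimination. -/
open FirstOrder Language

universe w

/-- A sentence is existential (`∃₁`) if it is a quantifier-free formula closed by a block of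
existential quantifiers. -/
def IsExistentialSentence {L : FirstOrder.Language} (φ : L.Sentence) : Prop :=
  ∃ (n : ℕ) (ψ : L.BoundedFormula Empty n), ψ.IsQF ∧ φ = ψ.exs

/-- A theory is `∃₁`-axiomatizable if it has the same models as some set of existential
sentences. -/
def IsExistentiallyAxiomatized (L : FirstOrder.Language) (T : L.Theory) : Prop :=
  ∃ A : L.Theory, (∀ φ ∈ A, IsExistentialSentence φ) ∧
    ∀ (M : Type w) [L.Structure M], M ⊨ T ↔ M ⊨ A

/-- In the structure `M`, every finite Boolean combination of the unary predicates that is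
realized at all is realized infinitely often. -/
def CombinationsRealizedInfinitely (L : FirstOrder.Language) (M : Type*) [L.Structure M] : Prop :=
  ∀ s t : Finset (L.Relations 1),
    (∃ x : M, (∀ r ∈ s, Structure.RelMap r ![x]) ∧ (∀ r ∈ t, ¬Structure.RelMap r ![x])) →
    {x : M | (∀ r ∈ s, Structure.RelMap r ![x]) ∧ (∀ r ∈ t, ¬Structure.RelMap r ![x])}.Infinite

/-!
Replacing every element of a model of `T` by countably many copies carrying the same predicates
gives a structure into which the model embeds; it therefore satisfies the existential axioms, hence
`T`, and in it every realized Boolean combination of predicates is realized infinitely often. By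
completeness, the sentences "the combination is realized at least `k` times" transfer to every
model of `T`. So for any finite set `R` of predicates, an element `b` new over a tuple `ys` in one
model is matched over a tuple `xs` with the same quantifier-free `R`-type in any other model by an
element outside `xs` with the same `R`-predicates. By induction on formulas, the truth of each
formula modulo `T` depends only on the quantifier-free `R`-type of the tuple for some finite `R`,
and such a formula is equivalent to the finite disjunction of the types that satisfy it.
-/

theorem IsExistentialSentence.realize_embedding {L : Language} {M N : Type*} [L.Structure M]
    [L.Structure N] {φ : L.Sentence} (hφ : IsExistentialSentence φ) (f : M ↪[L] N)
    (h : M ⊨ φ) : N ⊨ φ := by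
  obtain ⟨n, ψ, hψ, rfl⟩ := hφ
  obtain ⟨xs, hxs⟩ := BoundedFormula.realize_exs.1 h
  refine BoundedFormula.realize_exs.2 ⟨f ∘ xs, ?_⟩
  rw [← hψ.realize_embedding f] at hxs
  rwa [Subsingleton.elim (f ∘ default) default] at hxs

theorem IsExistentiallyAxiomatized.model_of_embedding {L : Language} {T : L.Theory}
    (hT : IsExistentiallyAxiomatized.{w} L T) {M N : Type w} [L.Structure M] [L.Structure N]
    (f : M ↪[L] N) [M ⊨ T] : N ⊨ T := by
  obtain ⟨A, hA, hTA⟩ := hT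
  have hM : M ⊨ A := (hTA M).1 inferInstance
  exact (hTA N).2 ⟨fun φ hφ => (hA φ hφ).realize_embedding f (hM.realize_of_mem φ hφ)⟩

namespace FirstOrder.Language

universe u v

variable {L : Language.{u, v}}

open Structure Cardinal

namespace BoundedFormula

variable {α β : Type*} {n : ℕ}

theorem IsQF.foldr_inf {l : List (L.BoundedFormula α n)} (h : ∀ φ ∈ l, φ.IsQF) :
    (l.foldr (· ⊓ ·) ⊤).IsQF := by
  induction l with
  | nil => exact IsQF.top
  | cons φ l ih => exact (h φ (by simp)).inf (ih fun ψ hψ => h ψ (by simp [hψ]))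

theorem IsQF.foldr_sup {l : List (L.BoundedFormula α n)} (h : ∀ φ ∈ l, φ.IsQF) :
    (l.foldr (· ⊔ ·) ⊥).IsQF := by
  induction l with
  | nil => exact isQF_bot
  | cons φ l ih => exact (h φ (by simp)).sup (ih fun ψ hψ => h ψ (by simp [hψ]))

theorem IsQF.iInf [Finite β] {f : β → L.BoundedFormula α n} (h : ∀ b, (f b).IsQF) :
    (iInf f).IsQF :=
  IsQF.foldr_inf fun _ hφ => by
    obtain ⟨b, -, rfl⟩ := List.mem_map.1 hφ
    exact h b

theorem IsQF.iSup [Finite β] {f : β → L.BoundedFormula α n} (h : ∀ b, (f b).IsQF) :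
    (iSup f).IsQF :=
  IsQF.foldr_sup fun _ hφ => by
    obtain ⟨b, -, rfl⟩ := List.mem_map.1 hφ
    exact h b

end BoundedFormula

theorem Term.exists_eq_var_inr [L.IsRelational] {n : ℕ} (t : L.Term (Empty ⊕ Fin n)) :
    ∃ i, t = var (Sum.inr i) := by
  rcases t with (e | i) | ⟨f, -⟩
  · exact e.elim
  · exact ⟨i, rfl⟩
  · exact isEmptyElim f

theorem Theory.IsSatisfiable.nonempty_modelType_of_countable [Countable L.Symbols]
    {T : L.Theory} (hT : T.IsSatisfiable) : Nonempty (T.ModelType.{u, v, w}) := by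
  obtain ⟨M⟩ := hT
  rcases finite_or_infinite M with hM | hM
  · have : Small.{w} M := Countable.toSmall M
    exact ⟨M.shrink⟩
  · obtain ⟨N, -⟩ := Theory.exists_model_card_eq ⟨M, hM⟩ ℵ₀ le_rfl
      (by rw [lift_aleph0]; exact lift_le_aleph0.2 mk_le_aleph0)
    exact ⟨N⟩

/-- Countably many copies of each element of `M`, indistinguishable by the relations. -/
structure Copies (M : Type*) where
  point : M
  index : ℕ

namespace Copies

variable {M : Type*} [L.Structure M]

instance [Nonempty M] : Nonempty (Copies M) := ⟨⟨Classical.arbitrary M, 0⟩⟩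

instance : L.Structure (Copies M) where
  funMap f xs := ⟨funMap f fun i => (xs i).point, 0⟩
  RelMap r xs := RelMap r fun i => (xs i).point

def embedding : M ↪[L] Copies M where
  toFun a := ⟨a, 0⟩
  inj' _ _ h := congrArg point h

theorem relMap_unary (r : L.Relations 1) (x : Copies M) :
    RelMap r ![x] ↔ RelMap r ![x.point] := by
  change RelMap r (fun i => (![x] i).point) ↔ _
  rw [show (fun i => (![x] i).point) = ![x.point] from funext fun i => by fin_cases i; rfl]

theorem combinationsRealizedInfinitely : CombinationsRealizedInfinitely L (Copies M) := by
  rintro s t ⟨x, hx⟩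
  refine Set.infinite_of_injective_forall_mem (f := Copies.mk x.point)
    (fun _ _ h => congrArg index h) fun k => ?_
  simpa [relMap_unary] using hx

end Copies

section Combinations

variable (M : Type*) [L.Structure M]

def combinationSet (s t : Finset (L.Relations 1)) : Set M :=
  {x | (∀ r ∈ s, RelMap r ![x]) ∧ ∀ r ∈ t, ¬RelMap r ![x]}

open BoundedFormula in
noncomputable def combinationCardGe (s t : Finset (L.Relations 1)) (k : ℕ) : L.Sentence :=
  (iInf (fun ij : {ij : Fin k × Fin k // ij.1 ≠ ij.2} => ∼((&ij.1.1).bdEqual &ij.1.2)) ⊓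
    iInf fun i : Fin k =>
      iInf (fun r : s => r.1.boundedFormula₁ &i) ⊓
        iInf fun r : t => ∼(r.1.boundedFormula₁ &i)).exs

variable {M}

theorem realize_combinationCardGe {s t : Finset (L.Relations 1)} {k : ℕ} :
    M ⊨ combinationCardGe s t k ↔
      ∃ xs : Fin k → M, Function.Injective xs ∧ ∀ i, xs i ∈ combinationSet M s t := by
  simp only [combinationCardGe, Sentence.Realize, BoundedFormula.realize_exs,
    BoundedFormula.realize_inf, BoundedFormula.realize_iInf, BoundedFormula.realize_not,
    BoundedFormula.realize_bdEqual, BoundedFormula.realize_rel₁, Function.comp_apply,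
    Term.realize_var, Sum.elim_inr, Subtype.forall, Prod.forall, combinationSet, Set.mem_ofPred_eq]
  refine exists_congr fun xs => and_congr_left fun _ => ?_
  exact ⟨fun h i j hij => by_contra fun hne => h i j hne hij, fun h i j hne hij => hne (h hij)⟩

theorem nonempty_combinationSet_iff {s t : Finset (L.Relations 1)} :
    (combinationSet M s t).Nonempty ↔ M ⊨ combinationCardGe s t 1 := by
  rw [realize_combinationCardGe]
  exact ⟨fun ⟨x, hx⟩ => ⟨fun _ => x, Function.injective_of_subsingleton _, fun _ => hx⟩,
    fun ⟨xs, _, hxs⟩ => ⟨xs 0, hxs 0⟩⟩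

theorem infinite_combinationSet_iff {s t : Finset (L.Relations 1)} :
    (combinationSet M s t).Infinite ↔ ∀ k, M ⊨ combinationCardGe s t k := by
  simp only [realize_combinationCardGe]
  refine ⟨fun h k => ?_, fun h hfin => ?_⟩
  · let e : Fin k ↪ combinationSet M s t := Fin.valEmbedding.trans h.natEmbedding
    exact ⟨fun i => e i, Subtype.val_injective.comp e.injective, fun i => (e i).2⟩
  · have := hfin.to_subtype
    obtain ⟨xs, hinj, hxs⟩ := h (Nat.card (combinationSet M s t) + 1)
    have := Finite.card_le_of_embedding
      ⟨fun i => (⟨xs i, hxs i⟩ : combinationSet M s t), fun i j hij => hinj congr($hij.1)⟩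
    simp at this

theorem Theory.IsComplete.infinite_combinationSet {T : L.Theory} (hT : T.IsComplete)
    {M₀ : Type*} [L.Structure M₀] [M₀ ⊨ T] [Nonempty M₀]
    (h₀ : CombinationsRealizedInfinitely L M₀)
    {N : Type*} [L.Structure N] [N ⊨ T] [Nonempty N] [M ⊨ T] [Nonempty M]
    {s t : Finset (L.Relations 1)} (hN : (combinationSet N s t).Nonempty) :
    (combinationSet M s t).Infinite := by
  rw [nonempty_combinationSet_iff, (hT.models_elementarily_equivalent N M₀).realize_sentence,
    ← nonempty_combinationSet_iff] at hN
  rw [infinite_combinationSet_iff]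
  intro k
  rw [(hT.models_elementarily_equivalent M M₀).realize_sentence]
  exact infinite_combinationSet_iff.1 (h₀ s t hN) k

end Combinations

section QFType

variable {M N : Type*} [L.Structure M] [L.Structure N] {n : ℕ} (R : Finset (L.Relations 1))

def qfType (xs : Fin n → M) : (Fin n → Fin n → Prop) × (Fin n → R → Prop) :=
  (fun i j => xs i = xs j, fun i r => RelMap r.1 ![xs i])

variable {R}

theorem qfType_eq_qfType_iff {xs : Fin n → M} {ys : Fin n → N} :
    qfType R xs = qfType R ys ↔ (∀ i j, xs i = xs j ↔ ys i = ys j) ∧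
      ∀ i, ∀ r ∈ R, (RelMap r ![xs i] ↔ RelMap r ![ys i]) := by
  simp [qfType, Prod.ext_iff, funext_iff, eq_iff_iff]

theorem qfType_eq_qfType_of_subset {S : Finset (L.Relations 1)} (hRS : R ⊆ S)
    {xs : Fin n → M} {ys : Fin n → N} (h : qfType S xs = qfType S ys) :
    qfType R xs = qfType R ys := by
  rw [qfType_eq_qfType_iff] at h ⊢
  exact ⟨h.1, fun i r hr => h.2 i r (hRS hr)⟩

theorem qfType_snoc_eq_qfType_snoc {xs : Fin n → M} {ys : Fin n → N} {a : M} {b : N}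
    (h : qfType R xs = qfType R ys) (heq : ∀ i, xs i = a ↔ ys i = b)
    (hrel : ∀ r ∈ R, RelMap r ![a] ↔ RelMap r ![b]) :
    qfType R (Fin.snoc xs a : Fin (n + 1) → M) =
      qfType R (Fin.snoc ys b : Fin (n + 1) → N) := by
  rw [qfType_eq_qfType_iff] at h ⊢
  refine ⟨fun i j => ?_, fun i r hr => ?_⟩
  · induction i using Fin.lastCases <;> induction j using Fin.lastCases <;>
      simp [h.1, heq, @eq_comm _ a, @eq_comm _ b]
  · induction i using Fin.lastCases <;> simp [h.2 _ r hr, hrel r hr]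

variable (R)

open Classical BoundedFormula in
noncomputable def qfTypeFormula {α : Type*}
    (d : (Fin n → Fin n → Prop) × (Fin n → R → Prop)) : L.BoundedFormula α n :=
  (iInf fun ij : Fin n × Fin n =>
    if d.1 ij.1 ij.2 then (&ij.1).bdEqual &ij.2 else ∼((&ij.1).bdEqual &ij.2)) ⊓
  iInf fun ir : Fin n × R =>
    if d.2 ir.1 ir.2 then ir.2.1.boundedFormula₁ &ir.1 else ∼(ir.2.1.boundedFormula₁ &ir.1)

variable {R}

theorem isQF_qfTypeFormula {α : Type*} (d : (Fin n → Fin n → Prop) × (Fin n → R → Prop)) :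
    (qfTypeFormula R d : L.BoundedFormula α n).IsQF := by
  refine .inf (.iInf fun _ => ?_) (.iInf fun _ => ?_) <;> split_ifs
  exacts [(BoundedFormula.IsAtomic.equal _ _).isQF, (BoundedFormula.IsAtomic.equal _ _).isQF.not,
    (BoundedFormula.IsAtomic.rel _ _).isQF, (BoundedFormula.IsAtomic.rel _ _).isQF.not]

theorem realize_qfTypeFormula {α : Type*}
    (d : (Fin n → Fin n → Prop) × (Fin n → R → Prop)) {v : α → M} {xs : Fin n → M} :
    (qfTypeFormula R d).Realize v xs ↔ qfType R xs = d := by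
  simp only [qfType, Prod.ext_iff, funext_iff, eq_iff_iff, qfTypeFormula,
    BoundedFormula.realize_inf, BoundedFormula.realize_iInf, Prod.forall]
  refine and_congr (forall₂_congr fun i j => ?_) (forall₂_congr fun i r => ?_) <;>
    split_ifs with hd <;> simp [hd]

end QFType

theorem Theory.IsComplete.exists_qfType_snoc_eq {T : L.Theory} (hT : T.IsComplete)
    {M₀ : Type*} [L.Structure M₀] [M₀ ⊨ T] [Nonempty M₀]
    (h₀ : CombinationsRealizedInfinitely L M₀)
    {M N : Type*} [L.Structure M] [L.Structure N] [M ⊨ T] [N ⊨ T] [Nonempty M] [Nonempty N]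
    {R : Finset (L.Relations 1)} {n : ℕ} {xs : Fin n → M} {ys : Fin n → N}
    (h : qfType R xs = qfType R ys) (b : N) :
    ∃ a, qfType R (Fin.snoc xs a : Fin (n + 1) → M) =
      qfType R (Fin.snoc ys b : Fin (n + 1) → N) := by
  classical
  have h' := qfType_eq_qfType_iff.1 h
  by_cases hb : ∃ i, ys i = b
  · obtain ⟨i, rfl⟩ := hb
    exact ⟨xs i, qfType_snoc_eq_qfType_snoc h (fun j => h'.1 j i) fun r hr => h'.2 i r hr⟩
  simp only [not_exists] at hb
  let s := R.filter fun r => RelMap r ![b]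
  let t := R.filter fun r => ¬RelMap r ![b]
  have hbst : b ∈ combinationSet N s t :=
    ⟨fun r hr => (Finset.mem_filter.1 hr).2, fun r hr => (Finset.mem_filter.1 hr).2⟩
  obtain ⟨a, ha, hax⟩ :=
    ((hT.infinite_combinationSet h₀ ⟨b, hbst⟩).sdiff (Set.finite_range xs)).nonempty
  refine ⟨a, qfType_snoc_eq_qfType_snoc h
    (fun i => iff_of_false (fun hi => hax ⟨i, hi⟩) (hb i)) fun r hr => ?_⟩
  by_cases hrb : RelMap r ![b]
  · exact iff_of_true (ha.1 r (Finset.mem_filter.2 ⟨hr, hrb⟩)) hrb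
  · exact iff_of_false (ha.2 r (Finset.mem_filter.2 ⟨hr, hrb⟩)) hrb

def IsQFTypeDetermined (T : L.Theory) (R : Finset (L.Relations 1)) {n : ℕ}
    (φ : L.BoundedFormula Empty n) : Prop :=
  ∀ (M N : T.ModelType.{u, v, max u v}) (vM : Empty → M) (vN : Empty → N)
    (xs : Fin n → M) (ys : Fin n → N),
    qfType R xs = qfType R ys → (φ.Realize vM xs ↔ φ.Realize vN ys)

namespace IsQFTypeDetermined

variable {T : L.Theory} {R S : Finset (L.Relations 1)} {n : ℕ}

theorem mono {φ : L.BoundedFormula Empty n} (h : IsQFTypeDetermined T R φ) (hRS : R ⊆ S) :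
    IsQFTypeDetermined T S φ :=
  fun M N vM vN xs ys hxy => h M N vM vN xs ys (qfType_eq_qfType_of_subset hRS hxy)

theorem imp [DecidableEq (L.Relations 1)] {φ ψ : L.BoundedFormula Empty n}
    (hφ : IsQFTypeDetermined T R φ) (hψ : IsQFTypeDetermined T S ψ) :
    IsQFTypeDetermined T (R ∪ S) (φ.imp ψ) :=
  fun M N vM vN xs ys hxy => by
    simp only [BoundedFormula.realize_imp,
      (hφ.mono Finset.subset_union_left) M N vM vN xs ys hxy,
      (hψ.mono Finset.subset_union_right) M N vM vN xs ys hxy]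

theorem all (hT : T.IsComplete) {M₀ : Type*} [L.Structure M₀] [M₀ ⊨ T] [Nonempty M₀]
    (h₀ : CombinationsRealizedInfinitely L M₀) {φ : L.BoundedFormula Empty (n + 1)}
    (h : IsQFTypeDetermined T R φ) : IsQFTypeDetermined T R φ.all := by
  suffices ∀ (M N : T.ModelType.{u, v, max u v}) vM vN (xs : Fin n → M) (ys : Fin n → N),
      qfType R xs = qfType R ys → φ.all.Realize vM xs → φ.all.Realize vN ys from
    fun M N vM vN xs ys hxy => ⟨this M N vM vN xs ys hxy, this N M vN vM ys xs hxy.symm⟩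
  intro M N vM vN xs ys hxy hM b
  obtain ⟨a, ha⟩ := hT.exists_qfType_snoc_eq h₀ hxy b
  exact (h M N vM vN _ _ ha).1 (hM a)

theorem exists_isQF_iff {φ : L.BoundedFormula Empty n} (h : IsQFTypeDetermined T R φ) :
    ∃ ψ : L.BoundedFormula Empty n, ψ.IsQF ∧ T.Iff φ ψ := by
  let realized := {d | ∃ (M : T.ModelType.{u, v, max u v}) (vM : Empty → M) (xs : Fin n → M),
    qfType R xs = d ∧ φ.Realize vM xs}
  refine ⟨BoundedFormula.iSup fun d : realized => qfTypeFormula R d.1,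
    .iSup fun d => isQF_qfTypeFormula d.1, fun M vM xs => ?_⟩
  simp only [BoundedFormula.realize_iff, BoundedFormula.realize_iSup, realize_qfTypeFormula]
  constructor
  · exact fun hφ => ⟨⟨_, M, vM, xs, rfl, hφ⟩, rfl⟩
  · rintro ⟨⟨_, N, vN, ys, rfl, hφ⟩, hyx⟩
    exact (h N M vN vM ys xs hyx.symm).1 hφ

end IsQFTypeDetermined

theorem exists_isQFTypeDetermined [L.IsRelational] (hun : ∀ l, l ≠ 1 → IsEmpty (L.Relations l))
    {T : L.Theory} (hT : T.IsComplete) {M₀ : Type*} [L.Structure M₀] [M₀ ⊨ T] [Nonempty M₀]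
    (h₀ : CombinationsRealizedInfinitely L M₀) {n : ℕ} (φ : L.BoundedFormula Empty n) :
    ∃ R, IsQFTypeDetermined T R φ := by
  classical
  induction φ with
  | falsum => exact ⟨∅, fun _ _ _ _ _ _ _ => Iff.rfl⟩
  | equal t₁ t₂ =>
    obtain ⟨i, rfl⟩ := Term.exists_eq_var_inr t₁
    obtain ⟨j, rfl⟩ := Term.exists_eq_var_inr t₂
    exact ⟨∅, fun M N vM vN xs ys hxy => (qfType_eq_qfType_iff.1 hxy).1 i j⟩
  | @rel _ l r ts =>
    rcases eq_or_ne l 1 with rfl | hl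
    · obtain ⟨i, hi⟩ := Term.exists_eq_var_inr (ts 0)
      have hts : ts = ![var (Sum.inr i)] := funext fun k => by fin_cases k; exact hi
      subst hts
      refine ⟨{r}, fun M N vM vN xs ys hxy => ?_⟩
      change (r.boundedFormula₁ _).Realize vM xs ↔ (r.boundedFormula₁ _).Realize vN ys
      simpa using (qfType_eq_qfType_iff.1 hxy).2 i r (Finset.mem_singleton_self r)
    · exact (hun l hl).elim r
  | imp φ ψ ihφ ihψ =>
    obtain ⟨R, hR⟩ := ihφ
    obtain ⟨S, hS⟩ := ihψ
    exact ⟨R ∪ S, hR.imp hS⟩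
  | all φ ih =>
    obtain ⟨R, hR⟩ := ih
    exact ⟨R, hR.all hT h₀⟩

end FirstOrder.Language

/-- a complete `∃₁`-axiomatizable theory in a language consisting only of
(countably many) unary predicates is the theory of a structure in which every realized finite
Boolean combination of the predicates is realized infinitely often, and it admits quantifier
elimination. -/
theorem complete_existential_unary_theory (L : FirstOrder.Language) [L.IsRelational]
    [Countable (L.Relations 1)] (hun : ∀ n, n ≠ 1 → IsEmpty (L.Relations n))
    (T : L.Theory) (hT : T.IsComplete) (hax : IsExistentiallyAxiomatized.{0} L T) :
    (∃ (M : Type) (_ : L.Structure M),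
      CombinationsRealizedInfinitely L M ∧ M ⊨ T) ∧
    (∀ (n : ℕ) (φ : L.BoundedFormula Empty n),
      ∃ ψ : L.BoundedFormula Empty n, ψ.IsQF ∧ Theory.Iff T φ ψ) := by
  have : ∀ l, Countable (L.Relations l) := fun l => by
    rcases eq_or_ne l 1 with rfl | hl
    · infer_instance
    · have := hun l hl
      infer_instance
  obtain ⟨M⟩ : Nonempty (T.ModelType.{_, _, 0}) := hT.1.nonempty_modelType_of_countable
  have hT' : Copies M ⊨ T := hax.model_of_embedding Copies.embedding
  have h₀ : CombinationsRealizedInfinitely L (Copies M) := Copies.combinationsRealizedInfinitely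
  refine ⟨⟨Copies M, inferInstance, h₀, hT'⟩, fun n φ => ?_⟩
  obtain ⟨R, hR⟩ := exists_isQFTypeDetermined hun hT h₀ φ
  exact hR.exists_isQF_iff
end
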